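/- arXiv:0806.0258 — 10 statements merged into one kernel-verified Lean document; each statement's English description precedes it below -/
import Mathlib

section
/- Let p be an odd prime. There exists an element λ in ℤ_p[ζ_p] such that ℤ_p[ζ_p] = ℤ_p[λ], λ^(p-1) = -p, and λ ≡ 1 - ζ_p modulo (1 - ζ_p)^2. -/
/-!
Let `u = ∏_{k=1}^{p-1} (1 - ζ^k)/(1 - ζ)`. It is a unit with `p = (1 - ζ)^(p-1) u`, and since
`ζ ≡ 1 mod (1 - ζ)`, Wilson's theorem gives `u ≡ (p-1)! ≡ -1`. The ring `O = ℤ_p[ζ]` is the ring of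
integers, because the minimal polynomial `Φ_p(X + 1)` of `ζ - 1` is Eisenstein. Being finite over
`ℤ_p`, `O` is `p`-adically, hence `(1 - ζ)`-adically, complete, so Hensel's lemma yields
`a ≡ 1 mod (1 - ζ)` with `a^(p-1) = -u`, and `λ = (1 - ζ) a` satisfies `λ^(p-1) = -p`. Finally
`O = ℤ_p + λ O` and `λ^(p-1) O = p O`, so `O = ℤ_p[λ]` by Nakayama's lemma.
-/

open Polynomial Finset IsLocalRing

universe u

theorem IsAdicComplete.of_finite {R M : Type u} [CommRing R] [IsNoetherianRing R] (I : Ideal R)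
    [IsAdicComplete I R] [AddCommGroup M] [Module R M] [Module.Finite R M] :
    IsAdicComplete I M := by
  rw [← AdicCompletion.of_bijective_iff]
  -- `M ≃ R ⊗ M ≃ R̂ ⊗ M → M̂`, the last map being bijective for finite `M` over Noetherian `R`
  have hof : ⇑(AdicCompletion.of I M) = AdicCompletion.ofTensorProduct I M ∘
      ((TensorProduct.lid R M).symm ≪≫ₗ (AdicCompletion.ofLinearEquiv I R).rTensor M) := by
    funext x
    simp [AdicCompletion.ofTensorProduct_tmul, show AdicCompletion.of I R 1 = 1 from rfl]
  rw [hof]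
  exact (AdicCompletion.ofTensorProduct_bijective_of_finite_of_isNoetherian I M).comp
    (LinearEquiv.bijective _)

theorem IsAdicComplete.of_pow {R M : Type*} [CommRing R] [AddCommGroup M] [Module R M]
    {J : Ideal R} {k : ℕ} (hk : k ≠ 0) [IsAdicComplete (J ^ k) M] : IsAdicComplete J M := by
  have hle : ∀ {m n : ℕ}, m ≤ n → (J ^ n • ⊤ : Submodule R M) ≤ J ^ m • ⊤ := fun h =>
    Submodule.smul_mono_left (Ideal.pow_le_pow_right h)
  have hn : ∀ n, n ≤ k * n := fun n => Nat.le_mul_of_pos_left n (Nat.pos_of_ne_zero hk)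
  refine { haus' := fun x hx => IsHausdorff.haus (I := J ^ k) inferInstance x fun n => ?_,
           prec' := fun f hf => ?_ }
  · rw [← pow_mul]
    exact hx (k * n)
  · obtain ⟨L, hL⟩ := IsPrecomplete.prec (I := J ^ k) inferInstance
      (f := fun n => f (k * n)) fun {m n} hmn => by
        rw [← pow_mul]
        exact hf (Nat.mul_le_mul_left k hmn)
    refine ⟨L, fun n => (hf (hn n)).trans ((hL n).mono ?_)⟩
    rw [← pow_mul]
    exact hle (hn n)

theorem HenselianRing.exists_pow_eq_of_sub_one_mem {A : Type*} [CommRing A] {I : Ideal A}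
    [HenselianRing A I] {n : ℕ} (hn : n ≠ 0) (hnI : IsUnit (Ideal.Quotient.mk I n)) {w : A}
    (hw : w - 1 ∈ I) : ∃ a : A, a ^ n = w ∧ a - 1 ∈ I := by
  obtain ⟨a, ha, ha1⟩ := HenselianRing.is_henselian (X ^ n - C w) (monic_X_pow_sub_C w hn) 1
    (by rw [eval_sub, eval_pow, eval_X, one_pow, eval_C, ← neg_sub]; exact neg_mem hw)
    (by simpa [derivative_X_pow] using hnI)
  exact ⟨a, by simpa [sub_eq_zero] using ha, ha1⟩

namespace Algebra

variable {R A : Type*} [CommRing R] [CommRing A] [Algebra R A]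

theorem adjoin_singleton_sub_algebraMap (x : A) (r : R) :
    adjoin R {x - algebraMap R A r} = adjoin R {x} := by
  refine le_antisymm (adjoin_le ?_) (adjoin_le ?_) <;> rw [Set.singleton_subset_iff]
  · exact sub_mem (self_mem_adjoin_singleton R x) (Subalgebra.algebraMap_mem _ r)
  · simpa using add_mem (self_mem_adjoin_singleton R (x - algebraMap R A r))
      (Subalgebra.algebraMap_mem _ r)

theorem exists_sub_algebraMap_mem_of_adjoin_eq_top {x : A} (hgen : adjoin R {x} = ⊤)
    {I : Ideal A} {c : R} (hxc : x - algebraMap R A c ∈ I) (y : A) :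
    ∃ r : R, y - algebraMap R A r ∈ I := by
  have hbot : (Ideal.Quotient.mkₐ R I).range = ⊥ := by
    rw [← Algebra.map_top, ← hgen, AlgHom.map_adjoin_singleton, Ideal.Quotient.mkₐ_eq_mk,
      Ideal.Quotient.eq.mpr hxc, ← Ideal.Quotient.mkₐ_eq_mk R, AlgHom.commutes,
      adjoin_singleton_algebraMap]
  obtain ⟨r, hr⟩ := Algebra.mem_bot.mp (hbot ▸ AlgHom.mem_range_self _ y)
  refine ⟨r, Ideal.Quotient.eq.mp ?_⟩
  rw [← Ideal.Quotient.mkₐ_eq_mk R, ← hr, AlgHom.commutes]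

theorem adjoin_singleton_eq_top_of_pow_mem_map [IsLocalRing R] [Module.Finite R A] {x : A}
    {n : ℕ} (hx : ∀ y : A, ∃ r : R, y - algebraMap R A r ∈ Ideal.span {x})
    (hxn : x ^ n ∈ (maximalIdeal R).map (algebraMap R A)) :
    adjoin R {x} = ⊤ := by
  have approx : ∀ k (y : A), ∃ s ∈ adjoin R {x}, y - s ∈ Ideal.span {x ^ k} := by
    intro k
    induction k with
    | zero => exact fun y => ⟨0, zero_mem _, by simp⟩
    | succ k ih =>
      intro y
      obtain ⟨s, hs, hys⟩ := ih y
      obtain ⟨z, hz⟩ := Ideal.mem_span_singleton'.mp hys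
      obtain ⟨r, hr⟩ := hx z
      obtain ⟨w, hw⟩ := Ideal.mem_span_singleton'.mp hr
      refine ⟨s + x ^ k * algebraMap R A r, add_mem hs (mul_mem (pow_mem
        (self_mem_adjoin_singleton R x) k) (Subalgebra.algebraMap_mem _ r)), ?_⟩
      rw [Ideal.mem_span_singleton']
      exact ⟨w, by linear_combination hw * x ^ k + hz⟩
  rw [← toSubmodule_eq_top, _root_.eq_top_iff]
  refine Submodule.le_of_le_smul_of_le_jacobson_bot Module.Finite.fg_top
    (maximalIdeal_le_jacobson ⊥) fun y _ => ?_
  obtain ⟨s, hs, hys⟩ := approx n y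
  obtain ⟨z, hz⟩ := Ideal.mem_span_singleton'.mp hys
  rw [Ideal.smul_top_eq_map]
  exact Submodule.mem_sup.mpr ⟨s, hs, y - s, by
    rw [← hz]; exact Ideal.mul_mem_left _ z hxn, add_sub_cancel s y⟩

end Algebra

section CyclotomicUnit

variable {A : Type*} [CommRing A]

/-- `∏_{k=1}^{n} (1 - ζ^k)/(1 - ζ)`, written without division. -/
def prodGeomSum (ζ : A) (n : ℕ) : A := ∏ k ∈ range n, ∑ i ∈ range (k + 1), ζ ^ i

theorem prodGeomSum_sub_factorial_mem (ζ : A) (n : ℕ) :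
    prodGeomSum ζ n - n.factorial ∈ Ideal.span {1 - ζ} := by
  have hζ : Ideal.Quotient.mk (Ideal.span {1 - ζ}) ζ = 1 :=
    (Ideal.Quotient.eq.mpr (by simp)).symm
  rw [← Ideal.Quotient.eq, prodGeomSum, map_prod, map_natCast, ← prod_range_add_one_eq_factorial,
    Nat.cast_prod]
  simp [hζ]

variable [IsDomain A] {p : ℕ} {ζ : A}

theorem IsPrimitiveRoot.natCast_eq_one_sub_pow_mul_prodGeomSum (hζ : IsPrimitiveRoot ζ p)
    (hp : p ≠ 0) : (p : A) = (1 - ζ) ^ (p - 1) * prodGeomSum ζ (p - 1) := by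
  obtain ⟨n, rfl⟩ := Nat.exists_eq_add_one_of_ne_zero hp
  rw [Nat.add_sub_cancel, Nat.cast_add_one, ← hζ.prod_one_sub_pow_eq_order, prodGeomSum]
  simp only [← mul_neg_geom_sum, prod_mul_distrib, prod_const, card_range]

theorem IsPrimitiveRoot.isUnit_prodGeomSum (hζ : IsPrimitiveRoot ζ p) (hp : p.Prime) :
    IsUnit (prodGeomSum ζ (p - 1)) :=
  IsUnit.prod_iff.mpr fun k _ => hζ.geom_sum_isUnit hp.two_le <|
    (Nat.coprime_of_lt_prime k.succ_ne_zero (by grind) hp).symm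

theorem IsPrimitiveRoot.natCast_mem_span_one_sub (hζ : IsPrimitiveRoot ζ p) (hp : p.Prime) :
    (p : A) ∈ Ideal.span {1 - ζ} := by
  rw [hζ.natCast_eq_one_sub_pow_mul_prodGeomSum hp.ne_zero, Ideal.mem_span_singleton]
  exact (dvd_pow_self _ (by have := hp.two_le; omega)).mul_right _

theorem IsPrimitiveRoot.neg_prodGeomSum_sub_one_mem (hζ : IsPrimitiveRoot ζ p) (hp : p.Prime) :
    -prodGeomSum ζ (p - 1) - 1 ∈ Ideal.span {1 - ζ} := by
  have : Fact p.Prime := ⟨hp⟩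
  obtain ⟨c, hc⟩ : p ∣ (p - 1).factorial + 1 := (ZMod.natCast_eq_zero_iff _ p).mp
    (by push_cast; rw [ZMod.wilsons_lemma]; ring)
  have hwilson : ((p - 1).factorial + 1 : A) = p * c := by
    simpa using congrArg (Nat.cast : ℕ → A) hc
  rw [show -prodGeomSum ζ (p - 1) - 1 =
    -(prodGeomSum ζ (p - 1) - (p - 1).factorial) - ((p - 1).factorial + 1) by ring, hwilson]
  exact sub_mem (neg_mem (prodGeomSum_sub_factorial_mem ζ (p - 1)))
    (Ideal.mul_mem_right _ _ (hζ.natCast_mem_span_one_sub hp))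

end CyclotomicUnit

section Eisenstein

variable {R : Type*} [CommRing R] [IsDomain R] {p : ℕ} [Fact p.Prime]

theorem Polynomial.cyclotomic_comp_X_add_one_isEisensteinAt_of_prime (hpR : Prime (p : R)) :
    ((cyclotomic p R).comp (X + 1)).IsEisensteinAt (Submodule.span R {(p : R)}) := by
  have hmap : ((cyclotomic p ℤ).comp (X + 1)).map (Int.castRingHom R) =
      (cyclotomic p R).comp (X + 1) := by
    simp [Polynomial.map_comp]
  have hmonic : ((cyclotomic p R).comp (X + 1)).Monic := by
    simpa using (cyclotomic.monic p R).comp_X_add_C 1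
  have hmonicℤ : ((cyclotomic p ℤ).comp (X + 1)).Monic := by
    simpa using (cyclotomic.monic p ℤ).comp_X_add_C 1
  refine hmonic.isEisensteinAt_of_mem_of_notMem
    ((Ideal.span_singleton_prime hpR.ne_zero).mpr hpR).ne_top (fun {i} hi => ?_) ?_
  · rw [← hmap, hmonicℤ.natDegree_map] at hi
    obtain ⟨c, hc⟩ := Ideal.mem_span_singleton.mp
      ((cyclotomic_comp_X_add_one_isEisensteinAt p).mem hi)
    rw [← hmap, coeff_map, hc, Submodule.mem_span_singleton]
    exact ⟨c, by simp [mul_comm]⟩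
  · rw [coeff_zero_eq_eval_zero, eval_comp, eval_add, eval_X, eval_one, zero_add,
      eval_one_cyclotomic_prime, Ideal.submodule_span_eq, Ideal.span_singleton_pow,
      Ideal.mem_span_singleton]
    intro h
    have := (pow_dvd_pow_iff (m := 1) hpR.ne_zero hpR.not_isUnit).mp (by simpa using h)
    omega

theorem Polynomial.irreducible_cyclotomic_comp_X_add_one_of_prime (hpR : Prime (p : R)) :
    Irreducible ((cyclotomic p R).comp (X + 1)) := by
  refine (cyclotomic_comp_X_add_one_isEisensteinAt_of_prime hpR).irreducible
    ((Ideal.span_singleton_prime hpR.ne_zero).mpr hpR)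
    (by simpa using ((cyclotomic.monic p R).comp_X_add_C 1).isPrimitive) ?_
  rw [natDegree_comp, natDegree_cyclotomic, Nat.totient_prime Fact.out, ← C_1, natDegree_X_add_C]
  simp [(Fact.out : p.Prime).one_lt]

theorem minpoly.eq_of_irreducible_of_monic_of_isIntegrallyClosed [IsIntegrallyClosed R]
    {S : Type*} [CommRing S] [IsDomain S] [Algebra R S] [Module.IsTorsionFree R S] {x : S}
    {P : R[X]} (hirr : Irreducible P) (hP : Polynomial.aeval x P = 0) (hmo : P.Monic) :
    P = minpoly R x := by
  have hx : IsIntegral R x := ⟨P, hmo, hP⟩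
  exact (eq_of_monic_of_associated (minpoly.monic hx) hmo <|
    (minpoly.irreducible hx).associated_of_dvd hirr (minpoly.isIntegrallyClosed_dvd hx hP)).symm

theorem IsPrimitiveRoot.minpoly_sub_one_eq_cyclotomic_comp_of_prime [IsIntegrallyClosed R]
    {S : Type*} [CommRing S] [IsDomain S] [Algebra R S] [Module.IsTorsionFree R S] {ζ : S}
    (hζ : IsPrimitiveRoot ζ p) (hpR : Prime (p : R)) :
    minpoly R (ζ - 1) = (cyclotomic p R).comp (X + 1) := by
  refine (minpoly.eq_of_irreducible_of_monic_of_isIntegrallyClosed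
    (irreducible_cyclotomic_comp_X_add_one_of_prime hpR) ?_
    (by simpa using (cyclotomic.monic p R).comp_X_add_C 1)).symm
  rw [aeval_comp, map_add, aeval_X, map_one, sub_add_cancel, aeval_def, ← eval_map,
    map_cyclotomic]
  exact hζ.isRoot_cyclotomic (Fact.out : p.Prime).pos

end Eisenstein

section Padic

variable {p : ℕ} [hp : Fact p.Prime]

theorem IsPrimitiveRoot.span_one_sub_pow_eq_map_maximalIdeal {A : Type*} [CommRing A]
    [IsDomain A] [Algebra ℤ_[p] A] {ζ : A} (hζ : IsPrimitiveRoot ζ p) :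
    Ideal.span {1 - ζ} ^ (p - 1) = (maximalIdeal ℤ_[p]).map (algebraMap ℤ_[p] A) := by
  rw [Ideal.span_singleton_pow, PadicInt.maximalIdeal_eq_span_p, Ideal.map_span,
    Set.image_singleton, map_natCast, hζ.natCast_eq_one_sub_pow_mul_prodGeomSum hp.out.ne_zero,
    Ideal.span_singleton_mul_right_unit (hζ.isUnit_prodGeomSum hp.out)]

theorem IsPrimitiveRoot.isAdicComplete_span_one_sub {A : Type} [CommRing A] [IsDomain A]
    [Algebra ℤ_[p] A] [Module.Finite ℤ_[p] A] {ζ : A} (hζ : IsPrimitiveRoot ζ p) :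
    IsAdicComplete (Ideal.span {1 - ζ}) A := by
  have : IsAdicComplete (Ideal.span {1 - ζ} ^ (p - 1)) A := by
    rw [hζ.span_one_sub_pow_eq_map_maximalIdeal, IsAdicComplete.map_algebraMap_iff]
    exact IsAdicComplete.of_finite _
  exact IsAdicComplete.of_pow (k := p - 1) (by have := hp.out.two_le; omega)

theorem IsPrimitiveRoot.exists_adjoin_eq_top_pow_eq_neg_p {A : Type} [CommRing A] [IsDomain A]
    [Algebra ℤ_[p] A] [Module.Finite ℤ_[p] A] {ζ : A} (hζ : IsPrimitiveRoot ζ p)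
    (hgen : Algebra.adjoin ℤ_[p] {ζ} = ⊤) :
    ∃ lam : A, Algebra.adjoin ℤ_[p] {lam} = ⊤ ∧ lam ^ (p - 1) = -p ∧
      (1 - ζ) ^ 2 ∣ lam - (1 - ζ) := by
  have := hζ.isAdicComplete_span_one_sub
  have hp1 : p - 1 ≠ 0 := by have := hp.out.two_le; omega
  have hnI : IsUnit (Ideal.Quotient.mk (Ideal.span {1 - ζ}) ((p - 1 : ℕ) : A)) := by
    rw [Nat.cast_sub hp.out.one_le, Nat.cast_one, map_sub, map_one,
      Ideal.Quotient.eq_zero_iff_mem.mpr (hζ.natCast_mem_span_one_sub hp.out), zero_sub]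
    exact isUnit_one.neg
  obtain ⟨a, ha, ha1⟩ :=
    HenselianRing.exists_pow_eq_of_sub_one_mem hp1 hnI (hζ.neg_prodGeomSum_sub_one_mem hp.out)
  have hspan : Ideal.span {(1 - ζ) * a} = Ideal.span {1 - ζ} :=
    Ideal.span_singleton_mul_right_unit
      ((isUnit_pow_iff hp1).mp (ha ▸ (hζ.isUnit_prodGeomSum hp.out).neg)) _
  refine ⟨(1 - ζ) * a, ?_, ?_, ?_⟩
  · refine Algebra.adjoin_singleton_eq_top_of_pow_mem_map (n := p - 1) (fun y => ?_) ?_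
    · rw [hspan]
      exact Algebra.exists_sub_algebraMap_mem_of_adjoin_eq_top hgen (c := 1)
        (by simpa using neg_mem (Ideal.mem_span_singleton_self (1 - ζ))) y
    · rw [← hζ.span_one_sub_pow_eq_map_maximalIdeal, ← hspan]
      exact Ideal.pow_mem_pow (Ideal.mem_span_singleton_self _) _
  · rw [mul_pow, ha, hζ.natCast_eq_one_sub_pow_mul_prodGeomSum hp.out.ne_zero]
    ring
  · obtain ⟨c, hc⟩ := Ideal.mem_span_singleton.mp ha1
    exact ⟨c, by rw [sq, mul_assoc, ← hc]; ring⟩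

variable {K : Type*} [Field K] [Algebra ℚ_[p] K] [Algebra ℤ_[p] K] [IsScalarTower ℤ_[p] ℚ_[p] K]

theorem PowerBasis.exists_pow_smul_mem_adjoin_padicInt (B : PowerBasis ℚ_[p] K) (x : K) :
    ∃ m : ℕ, (p : ℤ_[p]) ^ m • x ∈ Algebra.adjoin ℤ_[p] {B.gen} := by
  set c := B.basis.repr x
  obtain ⟨m, hm⟩ := pow_unbounded_of_one_lt (∑ i, ‖c i‖)
    (by exact_mod_cast hp.out.one_lt : (1 : ℝ) < p)
  have hc : ∀ i, ‖(p : ℚ_[p]) ^ m * c i‖ ≤ 1 := fun i => by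
    rw [norm_mul, norm_pow, Padic.norm_p, inv_pow,
      inv_mul_le_iff₀ (pow_pos (by exact_mod_cast hp.out.pos) m), mul_one]
    exact (single_le_sum (fun j _ => norm_nonneg (c j)) (mem_univ i)).trans hm.le
  let d i : ℤ_[p] := ⟨_, hc i⟩
  have hd i : (d i : ℚ_[p]) = p ^ m * c i := rfl
  refine ⟨m, ?_⟩
  have hx : (p : ℤ_[p]) ^ m • x = ∑ i, d i • B.gen ^ (i : ℕ) := by
    conv_lhs => rw [← B.basis.sum_repr x]
    rw [smul_sum]
    refine sum_congr rfl fun i _ => ?_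
    rw [B.coe_basis, ← algebraMap_smul ℚ_[p], ← algebraMap_smul ℚ_[p] (d i), smul_smul,
      PadicInt.algebraMap_apply, PadicInt.algebraMap_apply, hd, PadicInt.coe_pow,
      PadicInt.coe_natCast]
  rw [hx]
  exact sum_mem fun i _ =>
    Subalgebra.smul_mem _ (pow_mem (Algebra.self_mem_adjoin_singleton _ _) _) _

theorem PowerBasis.adjoin_padicInt_eq_integralClosure (B : PowerBasis ℚ_[p] K)
    (hint : IsIntegral ℤ_[p] B.gen)
    (hei : (minpoly ℤ_[p] B.gen).IsEisensteinAt (Submodule.span ℤ_[p] {(p : ℤ_[p])})) :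
    Algebra.adjoin ℤ_[p] {B.gen} = integralClosure ℤ_[p] K :=
  le_antisymm (adjoin_le_integralClosure hint) fun x hx =>
    have ⟨_, hm⟩ := B.exists_pow_smul_mem_adjoin_padicInt x
    mem_adjoin_of_smul_prime_pow_smul_of_minpoly_isEisensteinAt PadicInt.prime_p hint hx hm hei

theorem IsPrimitiveRoot.adjoin_padicInt_eq_integralClosure [IsCyclotomicExtension {p} ℚ_[p] K]
    {ζ : K} (hζ : IsPrimitiveRoot ζ p) :
    Algebra.adjoin ℤ_[p] {ζ} = integralClosure ℤ_[p] K := by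
  have : NeZero p := ⟨hp.out.ne_zero⟩
  have : FaithfulSMul ℤ_[p] K := .trans ℤ_[p] ℚ_[p] K
  have h := (hζ.subOnePowerBasis ℚ_[p]).adjoin_padicInt_eq_integralClosure
    (by rw [subOnePowerBasis_gen]; exact (hζ.isIntegral hp.out.pos).tower_top.sub isIntegral_one)
    (by rw [subOnePowerBasis_gen, hζ.minpoly_sub_one_eq_cyclotomic_comp_of_prime PadicInt.prime_p]
        exact cyclotomic_comp_X_add_one_isEisensteinAt_of_prime PadicInt.prime_p)
  rwa [subOnePowerBasis_gen, ← map_one (algebraMap ℤ_[p] K),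
    Algebra.adjoin_singleton_sub_algebraMap] at h

end Padic

theorem stmt_0_general (p : ℕ) [hp : Fact p.Prime]
    (K : Type) [Field K] [Algebra ℚ_[p] K] [Algebra ℤ_[p] K]
    [IsScalarTower ℤ_[p] ℚ_[p] K]
    [IsCyclotomicExtension {p} ℚ_[p] K]
    (ζ : K) (hζ : IsPrimitiveRoot ζ p) :
    ∃ lam : K, lam ∈ integralClosure ℤ_[p] K ∧
      Algebra.adjoin ℤ_[p] {lam} = integralClosure ℤ_[p] K ∧
      lam ^ (p - 1) = -(p : K) ∧
      ∃ c : K, c ∈ integralClosure ℤ_[p] K ∧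
        lam - (1 - ζ) = (1 - ζ) ^ 2 * c := by
  set O := Algebra.adjoin ℤ_[p] {ζ}
  have : Module.Finite ℤ_[p] O :=
    Algebra.finite_adjoin_simple_of_isIntegral (hζ.isIntegral hp.out.pos).tower_top
  set ζO : O := ⟨ζ, Algebra.self_mem_adjoin_singleton _ ζ⟩
  have hgenO : Algebra.adjoin ℤ_[p] {ζO} = ⊤ := by
    rw [← Algebra.adjoin_adjoin_coe_preimage]
    congr
    ext
    simp [ζO, Subtype.ext_iff]
  obtain ⟨lam, hgen, hpow, c, hc⟩ :=
    (IsPrimitiveRoot.coe_submonoidClass_iff.mp hζ : IsPrimitiveRoot ζO p)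
      |>.exists_adjoin_eq_top_pow_eq_neg_p hgenO
  rw [← hζ.adjoin_padicInt_eq_integralClosure]
  refine ⟨lam, lam.2, ?_, by simpa using congrArg Subtype.val hpow, c, c.2,
    by simpa using congrArg Subtype.val hc⟩
  rw [show (lam : K) = O.val lam from rfl, ← AlgHom.map_adjoin_singleton, hgen, Algebra.map_top,
    Subalgebra.range_val]

/-- Let `p` be an odd prime, `K = ℚ_p(ζ_p)` the `p`-th cyclotomic extension
of `ℚ_p`, and `ℤ_p[ζ_p]` its ring of integers (the integral closure of `ℤ_p` in `K`).
There exists an element `λ ∈ ℤ_p[ζ_p]` such that `ℤ_p[ζ_p] = ℤ_p[λ]`, `λ^(p-1) = -p`,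
and `λ ≡ 1 - ζ_p` modulo `(1 - ζ_p)²`. -/
theorem stmt_0 (p : ℕ) [hp : Fact p.Prime] (hodd : p ≠ 2)
    (K : Type) [Field K] [Algebra ℚ_[p] K] [Algebra ℤ_[p] K]
    [IsScalarTower ℤ_[p] ℚ_[p] K]
    [IsCyclotomicExtension {p} ℚ_[p] K]
    (ζ : K) (hζ : IsPrimitiveRoot ζ p) :
    ∃ lam : K, lam ∈ integralClosure ℤ_[p] K ∧
      Algebra.adjoin ℤ_[p] {lam} = integralClosure ℤ_[p] K ∧
      lam ^ (p - 1) = -(p : K) ∧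
      ∃ c : K, c ∈ integralClosure ℤ_[p] K ∧
        lam - (1 - ζ) = (1 - ζ) ^ 2 * c :=
  stmt_0_general p (hp := hp) K ζ hζ
end

section
/- Let p ≥ 5 be prime, O a complete DVR with uniformizer π and ramification index e ≥ 2 over ℤ_p, Γ = O ⊗ ℤ_p[ζ_p], and x = (1/π) ⊗ λ^(p-2) where λ^(p-1) = -p. Then the O-module T = Γ + xO is closed under multiplication, i.e., T is an O-subalgebra of the total fraction ring of Γ. -/
/-!
Write `ι` for the embedding of `Γ` into its total fraction ring. Since `p = π²c`, the relations
`x π = λ^(p-2)` and `λ^(p-1) = -π²c` give, after cancelling the unit `ι π`, that `x λ = -π c`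
and `x² = -c λ^(p-3)` both lie in `Γ`. Every `g ∈ Γ` is `r + λ g'` with `r ∈ O`, so
`x g ∈ Γ + x O`; expanding `(g + x r)(g' + x r')` then shows `Γ + x O` is multiplicatively
closed.
-/

def adjoinLine (R : Type*) {A K : Type*} [CommRing R] [CommRing A] [Algebra R A] [CommRing K]
    (ι : A →+* K) (x : K) : Set K :=
  {y | ∃ (g : A) (r : R), y = ι g + x * ι (algebraMap R A r)}

section

variable {M : Type*} [CommMonoid M] {x t l c : M} {n : ℕ}

theorem mul_eq_of_mul_eq_pow_succ (ht : IsUnit t) (hx : x * t = l ^ (n + 1))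
    (hl : l ^ (n + 2) = t ^ 2 * c) : x * l = t * c :=
  ht.mul_right_cancel <|
    calc x * l * t = x * t * l := mul_right_comm _ _ _
      _ = t * c * t := by rw [hx, ← pow_succ, hl, sq, mul_right_comm]

theorem sq_eq_of_mul_eq_pow_succ (ht : IsUnit t) (hx : x * t = l ^ (n + 1))
    (hl : l ^ (n + 2) = t ^ 2 * c) : x ^ 2 = c * l ^ n :=
  (ht.pow 2).mul_right_cancel <|
    calc x ^ 2 * t ^ 2 = (x * t) ^ 2 := (mul_pow _ _ _).symm
      _ = l ^ (n + 2) * l ^ n := by rw [hx, ← pow_mul, ← pow_add]; congr 1; omega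
      _ = c * l ^ n * t ^ 2 := by rw [hl, mul_comm (t ^ 2), mul_right_comm]

end

theorem exists_eq_algebraMap_add_mul {R A : Type*} [CommSemiring R] [Semiring A] [Algebra R A]
    {l : A} (hspan : Submodule.span R (Set.range (l ^ · : ℕ → A)) = ⊤) (g : A) :
    ∃ (r : R) (g' : A), g = algebraMap R A r + l * g' := by
  have hg : g ∈ (1 : Submodule R A) ⊔ LinearMap.range (LinearMap.mulLeft R l) := by
    refine (top_le_iff.mpr hspan).trans (Submodule.span_le.mpr ?_) Submodule.mem_top
    rintro _ ⟨_ | n, rfl⟩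
    · exact Submodule.mem_sup_left ⟨1, by simp⟩
    · exact Submodule.mem_sup_right ⟨l ^ n, (pow_succ' l n).symm⟩
  obtain ⟨_, ⟨r, rfl⟩, _, ⟨g', rfl⟩, hg⟩ := Submodule.mem_sup.mp hg
  exact ⟨r, g', by simpa [Algebra.algebraMap_eq_smul_one] using hg.symm⟩

section

variable (R : Type*) {A K : Type*} [CommRing R] [CommRing A] [Algebra R A] [CommRing K]
  (ι : A →+* K) {x : K}

theorem mul_mem_adjoinLine_of_mul_mem_range {l : A}
    (hspan : Submodule.span R (Set.range (l ^ · : ℕ → A)) = ⊤) (hxl : x * ι l ∈ Set.range ι)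
    (g : A) : x * ι g ∈ adjoinLine R ι x := by
  obtain ⟨r, g', rfl⟩ := exists_eq_algebraMap_add_mul hspan g
  obtain ⟨h, hh⟩ := hxl
  exact ⟨h * g', r, by rw [map_add, map_mul, map_mul, hh]; ring⟩

theorem mul_mem_adjoinLine (hx : ∀ g : A, x * ι g ∈ adjoinLine R ι x)
    (hxx : x * x ∈ Set.range ι) :
    ∀ a ∈ adjoinLine R ι x, ∀ c ∈ adjoinLine R ι x, a * c ∈ adjoinLine R ι x := by
  rintro _ ⟨g, r, rfl⟩ _ ⟨g', r', rfl⟩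
  obtain ⟨h, s, hh⟩ := hx g
  obtain ⟨h', s', hh'⟩ := hx g'
  obtain ⟨k, hk⟩ := hxx
  refine ⟨g * g' + algebraMap R A r' * h + algebraMap R A r * h'
    + algebraMap R A r * algebraMap R A r' * k, r' * s + r * s', ?_⟩
  simp only [map_add, map_mul]
  linear_combination ι (algebraMap R A r') * hh + ι (algebraMap R A r) * hh'
    + ι (algebraMap R A r) * ι (algebraMap R A r') * hk.symm

end

theorem stmt_4_general (p : ℕ) (hp5 : 5 ≤ p)
    (O : Type) [CommRing O]
    (π : O) (he : π ^ 2 ∣ (p : O))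
    (Γ : Type) [CommRing Γ] [Algebra O Γ]
    (lam : Γ) (hlam : lam ^ (p - 1) = -(p : Γ))
    (b : Module.Basis (Fin (p - 1)) O Γ) (hb : ∀ i : Fin (p - 1), b i = lam ^ (i : ℕ))
    (hπΓ : algebraMap O Γ π ∈ nonZeroDivisors Γ)
    (x : FractionRing Γ)
    (hx : x * algebraMap Γ (FractionRing Γ) (algebraMap O Γ π)
        = algebraMap Γ (FractionRing Γ) (lam ^ (p - 2)))
    (T : Set (FractionRing Γ))
    (hT : T = {y | ∃ (g : Γ) (o : O),
        y = algebraMap Γ (FractionRing Γ) g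
          + x * algebraMap Γ (FractionRing Γ) (algebraMap O Γ o)}) :
    ∀ a ∈ T, ∀ c ∈ T, a * c ∈ T := by
  subst hT
  obtain ⟨c, hc⟩ := he
  set ι := algebraMap Γ (FractionRing Γ)
  have ht : IsUnit (ι (algebraMap O Γ π)) :=
    IsLocalization.map_units (FractionRing Γ) (⟨_, hπΓ⟩ : nonZeroDivisors Γ)
  obtain ⟨n, hn1, hn2⟩ : ∃ n, p - 2 = n + 1 ∧ p - 1 = n + 2 := ⟨p - 3, by omega, by omega⟩
  rw [hn1, map_pow] at hx
  have hl : ι lam ^ (n + 2) = ι (algebraMap O Γ π) ^ 2 * ι (-algebraMap O Γ c) := by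
    rw [← map_pow, ← hn2, hlam, ← map_natCast (algebraMap O Γ), hc]
    simp only [map_mul, map_pow, map_neg, mul_neg]
  have hspan : Submodule.span O (Set.range (lam ^ · : ℕ → Γ)) = ⊤ :=
    top_le_iff.mp <| b.span_eq ▸
      Submodule.span_mono (by rintro _ ⟨i, rfl⟩; exact ⟨i, (hb i).symm⟩)
  refine mul_mem_adjoinLine O ι (mul_mem_adjoinLine_of_mul_mem_range O ι hspan ?_) ?_
  · exact ⟨_, (map_mul ι _ _).trans (mul_eq_of_mul_eq_pow_succ ht hx hl).symm⟩
  · exact ⟨-algebraMap O Γ c * lam ^ n,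
      by rw [map_mul, map_pow, ← sq, sq_eq_of_mul_eq_pow_succ ht hx hl]⟩

/-- Let `p ≥ 5` be prime, `O` a complete DVR with uniformizer `π` and
ramification index `e ≥ 2` over `ℤ_p` (so `π^2 ∣ p`), `Γ = O ⊗ ℤ_p[ζ_p]` (free over `O`
with basis `1, λ, …, λ^(p-2)`, where `λ^(p-1) = -p`), and `x = (1/π) ⊗ λ^(p-2)` in the
total fraction ring of `Γ`. Then the `O`-module `T = Γ + xO` is closed under
multiplication, i.e. `T` is an `O`-subalgebra of the total fraction ring of `Γ`. -/
theorem stmt_4 (p : ℕ) (hp : p.Prime) (hp5 : 5 ≤ p)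
    (O : Type) [CommRing O] [IsDomain O] [IsDiscreteValuationRing O] [CharZero O]
    [IsAdicComplete (IsLocalRing.maximalIdeal O) O]
    (π : O) (hπ : Irreducible π) (he : π ^ 2 ∣ (p : O))
    (Γ : Type) [CommRing Γ] [Algebra O Γ]
    (lam : Γ) (hlam : lam ^ (p - 1) = -(p : Γ))
    (b : Module.Basis (Fin (p - 1)) O Γ) (hb : ∀ i : Fin (p - 1), b i = lam ^ (i : ℕ))
    (hπΓ : algebraMap O Γ π ∈ nonZeroDivisors Γ)
    (x : FractionRing Γ)
    (hx : x * algebraMap Γ (FractionRing Γ) (algebraMap O Γ π)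
        = algebraMap Γ (FractionRing Γ) (lam ^ (p - 2)))
    (T : Set (FractionRing Γ))
    (hT : T = {y | ∃ (g : Γ) (o : O),
        y = algebraMap Γ (FractionRing Γ) g
          + x * algebraMap Γ (FractionRing Γ) (algebraMap O Γ o)}) :
    ∀ a ∈ T, ∀ c ∈ T, a * c ∈ T :=
  stmt_4_general p hp5 O π he Γ lam hlam b hb hπΓ x hx T hT
end

section
/- With T = Γ + xO as above (p ≥ 5, e ≥ 2, x = λ^(p-2)/π), one has π·T ⊆ Γ ⊆ T, and the quotient T/Γ is isomorphic to O/πO as an O-module. -/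
/-!
Since `π • x = λ^(p-2)` is a basis vector of `Γ`, comparing `λ^(p-2)`-coefficients in
`a • λ^(p-2) = π • g` shows that `a • x ∈ Γ` exactly when `π ∣ a`. The quotient `T/Γ` is
generated by the class of `x`, whose annihilator is therefore `πO`.
-/

section

variable (O : Type) [CommRing O] (Γ : Type) [CommRing Γ] [Algebra O Γ]

/-- The image of `Γ` in its total fraction ring, as an `O`-submodule. -/
noncomputable def GammaSub : Submodule O (FractionRing Γ) :=
  LinearMap.range (IsScalarTower.toAlgHom O Γ (FractionRing Γ)).toLinearMap

namespace Submodule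

theorem smul_mem_of_mem_sup_span_singleton {R M : Type*} [CommSemiring R] [AddCommMonoid M]
    [Module R M] {N : Submodule R M} {x t : M} {r : R}
    (hx : r • x ∈ N) (ht : t ∈ N ⊔ R ∙ x) : r • t ∈ N := by
  obtain ⟨n, hn, y, hy, rfl⟩ := mem_sup.mp ht
  obtain ⟨a, rfl⟩ := mem_span_singleton.mp hy
  rw [smul_add, smul_comm]
  exact N.add_mem (N.smul_mem r hn) (N.smul_mem a hx)

noncomputable def supSpanSingletonQuotientEquiv {R M : Type*} [CommRing R] [AddCommGroup M]
    [Module R M] (N : Submodule R M) (x : M) :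
    (↥(N ⊔ R ∙ x) ⧸ N.comap (N ⊔ R ∙ x).subtype) ≃ₗ[R]
      R ⧸ N.comap (LinearMap.toSpanSingleton R M x) :=
  let x' : ↥(N ⊔ R ∙ x) := ⟨x, mem_sup_right (mem_span_singleton_self x)⟩
  let φ := (N.comap (N ⊔ R ∙ x).subtype).mkQ ∘ₗ LinearMap.toSpanSingleton R _ x'
  have hφ_surjective : Function.Surjective φ := by
    rintro ⟨⟨t, ht⟩⟩
    obtain ⟨n, hn, y, hy, rfl⟩ := mem_sup.mp ht
    obtain ⟨a, rfl⟩ := mem_span_singleton.mp hy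
    refine ⟨a, (Quotient.eq _).mpr ?_⟩
    simpa [x'] using N.neg_mem hn
  have hφ_ker : LinearMap.ker φ = N.comap (LinearMap.toSpanSingleton R M x) := by
    ext a
    simp [φ, x', Quotient.mk_eq_zero]
  (φ.quotKerEquivOfSurjective hφ_surjective).symm.trans (quotEquivOfEq _ _ hφ_ker)

end Submodule

theorem LinearMap.comap_range_toSpanSingleton_eq_span_singleton
    {R A K ι : Type*} [CommSemiring R] [AddCommMonoid A] [Module R A] [AddCommMonoid K]
    [Module R K]
    {f : A →ₗ[R] K} (hf : Function.Injective f) (b : Module.Basis ι R A) {i : ι}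
    {π : R} {x : K} (hπx : π • x = f (b i)) :
    (LinearMap.range f).comap (LinearMap.toSpanSingleton R K x) = Ideal.span {π} := by
  ext a
  simp only [Submodule.mem_comap, LinearMap.toSpanSingleton_apply, LinearMap.mem_range,
    Ideal.mem_span_singleton']
  constructor
  · rintro ⟨g, hg⟩
    have hcoeff : π • g = a • b i := hf (by rw [map_smul, map_smul, hg, ← hπx, smul_comm])
    refine ⟨b.repr g i, ?_⟩
    simpa [mul_comm] using congrArg (fun y => b.repr y i) hcoeff
  · rintro ⟨c, rfl⟩
    exact ⟨c • b i, by rw [map_smul, ← hπx, smul_smul]⟩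

theorem stmt_5 (p : ℕ) (hp : p.Prime)
    (π : O)
    (lam : Γ)
    (b : Module.Basis (Fin (p - 1)) O Γ) (hb : ∀ i : Fin (p - 1), b i = lam ^ (i : ℕ))
    (x : FractionRing Γ)
    (hx : x * algebraMap Γ (FractionRing Γ) (algebraMap O Γ π)
        = algebraMap Γ (FractionRing Γ) (lam ^ (p - 2)))
    (T : Submodule O (FractionRing Γ))
    (hT : T = GammaSub O Γ ⊔ Submodule.span O {x}) :
    (∀ t ∈ T, algebraMap Γ (FractionRing Γ) (algebraMap O Γ π) * t ∈ GammaSub O Γ) ∧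
    GammaSub O Γ ≤ T ∧
    Nonempty ((↥T ⧸ (Submodule.comap T.subtype (GammaSub O Γ)))
      ≃ₗ[O] (O ⧸ (Ideal.span {π} : Ideal O))) := by
  subst hT
  have hp_two_le := hp.two_le
  have hπx : π • x = (IsScalarTower.toAlgHom O Γ (FractionRing Γ)).toLinearMap
      (b ⟨p - 2, by omega⟩) := by
    rw [hb]
    change _ = algebraMap Γ (FractionRing Γ) (lam ^ (p - 2))
    rw [← hx, mul_comm, ← Algebra.smul_def, algebraMap_smul]
  have hker := LinearMap.comap_range_toSpanSingleton_eq_span_singleton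
    (IsFractionRing.injective Γ (FractionRing Γ)) b hπx
  refine ⟨fun t ht => ?_, le_sup_left,
    ⟨(Submodule.supSpanSingletonQuotientEquiv _ x).trans (Submodule.quotEquivOfEq _ _ hker)⟩⟩
  rw [← Algebra.smul_def, algebraMap_smul]
  exact Submodule.smul_mem_of_mem_sup_span_singleton ⟨_, hπx.symm⟩ ht

end
end

section
/- Let p ≥ 5 be prime, O a complete DVR with uniformizer π and ramification index e ≥ 4 over ℤ_p, Γ = O ⊗ ℤ_p[ζ_p], x₁ = λ^(p-2)/π, x₂ = λ^(p-2)/π². Then T = Γ + x₁O + x₂O is an O-subalgebra of the total fraction ring of Γ, and π²T ⊆ Γ ⊆ T. -/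
/-!
Write `p = π⁴u`. Since `λ^(p-1) = -p`, the element `x₂ = λ^(p-2)/π²` satisfies
`λx₂ = -π²u` and `x₂² = -uλ^(p-3)`, both in `Γ`, while `x₁ = πx₂`. As `Γ = O + λΓ`
(it is spanned by powers of `λ`), this makes `T = Γ + Γx₂`, a ring because `x₂² ∈ Γ`;
and `π²T ⊆ Γ` because `π²x₂ = λ^(p-2)`.
-/

open Polynomial Submodule

section PowerBasis

variable {O Γ : Type*} [CommRing O] [CommRing Γ] [Algebra O Γ]

theorem adjoin_singleton_eq_top_of_basis {ι : Type*} (lam : Γ) (b : Module.Basis ι O Γ)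
    (e : ι → ℕ) (hb : ∀ i, b i = lam ^ e i) : Algebra.adjoin O {lam} = ⊤ := by
  rw [← Algebra.toSubmodule_eq_top, eq_top_iff, ← b.span_eq, span_le, Set.range_subset_iff]
  intro i
  rw [hb]
  exact pow_mem (Algebra.self_mem_adjoin_singleton O lam) _

theorem exists_eq_algebraMap_add_mul_of_adjoin_eq_top {lam : Γ}
    (h : Algebra.adjoin O {lam} = ⊤) (γ : Γ) :
    ∃ (c : O) (δ : Γ), γ = algebraMap O Γ c + lam * δ := by
  obtain ⟨f, rfl⟩ : γ ∈ (aeval (R := O) lam).range := by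
    rw [← Algebra.adjoin_singleton_eq_range_aeval, h]
    trivial
  refine ⟨f.coeff 0, aeval lam f.divX, ?_⟩
  have := congrArg (aeval lam) (X_mul_divX_add f)
  rw [map_add, map_mul, aeval_X, aeval_C] at this
  exact this.symm.trans (add_comm _ _)

end PowerBasis

section SpanOnePair

variable {Γ K : Type*} [CommRing Γ] [CommRing K] [Algebra Γ K] {x y : K}

theorem mem_span_one_pair_iff :
    y ∈ span Γ {1, x} ↔ ∃ g γ : Γ, y = algebraMap Γ K g + x * algebraMap Γ K γ := by
  simp only [mem_span_pair, Algebra.smul_def, mul_one, mul_comm x, eq_comm]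

theorem mul_mem_span_one_pair (hx : x * x ∈ Set.range (algebraMap Γ K)) {a c : K}
    (ha : a ∈ span Γ {1, x}) (hc : c ∈ span Γ {1, x}) : a * c ∈ span Γ {1, x} := by
  obtain ⟨t, ht⟩ := hx
  rw [mem_span_one_pair_iff] at ha hc ⊢
  obtain ⟨g, γ, rfl⟩ := ha
  obtain ⟨g', γ', rfl⟩ := hc
  refine ⟨g * g' + γ * γ' * t, g * γ' + γ * g', ?_⟩
  simp only [map_add, map_mul]
  linear_combination -(algebraMap Γ K γ * algebraMap Γ K γ' * ht)

theorem algebraMap_mul_mem_range_of_mem_span_one_pair {γ : Γ}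
    (hγ : algebraMap Γ K γ * x ∈ Set.range (algebraMap Γ K)) (hy : y ∈ span Γ {1, x}) :
    algebraMap Γ K γ * y ∈ Set.range (algebraMap Γ K) := by
  obtain ⟨t, ht⟩ := hγ
  obtain ⟨g, δ, rfl⟩ := mem_span_one_pair_iff.1 hy
  refine ⟨γ * g + t * δ, ?_⟩
  simp only [map_add, map_mul]
  linear_combination algebraMap Γ K δ * ht

theorem mem_span_one_pair_iff_of_forall_eq_algebraMap_add_mul {O : Type*} [CommRing O]
    [Algebra O Γ] {lam : Γ} (hdec : ∀ γ : Γ, ∃ (c : O) (δ : Γ), γ = algebraMap O Γ c + lam * δ)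
    (hlx : algebraMap Γ K lam * x ∈ Set.range (algebraMap Γ K)) :
    y ∈ span Γ {1, x} ↔
      ∃ (g : Γ) (o : O), y = algebraMap Γ K g + x * algebraMap Γ K (algebraMap O Γ o) := by
  refine mem_span_one_pair_iff.trans ⟨?_, fun ⟨g, o, hy⟩ => ⟨g, _, hy⟩⟩
  rintro ⟨g, γ, rfl⟩
  obtain ⟨c, δ, rfl⟩ := hdec γ
  obtain ⟨t, ht⟩ := hlx
  refine ⟨g + t * δ, c, ?_⟩
  simp only [map_add, map_mul]
  linear_combination -(algebraMap Γ K δ * ht)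

end SpanOnePair

section QuotientByUniformizer

variable {O Γ K : Type*} [CommRing O] [CommRing Γ] [CommRing K] [Algebra O Γ] [Algebra Γ K]
  {π u : O} {lam : Γ} {m : ℕ} {x : K}

theorem algebraMap_mul_eq_of_mul_sq_eq (hπ : IsUnit (algebraMap Γ K (algebraMap O Γ π)))
    (hlam : lam ^ (m + 2) = -algebraMap O Γ (π ^ 4 * u))
    (hx : x * algebraMap Γ K (algebraMap O Γ (π ^ 2)) = algebraMap Γ K (lam ^ (m + 1))) :
    algebraMap Γ K lam * x = algebraMap Γ K (-algebraMap O Γ (π ^ 2 * u)) := by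
  refine (hπ.pow 2).mul_right_cancel ?_
  have := congrArg (algebraMap Γ K) hlam
  simp only [map_pow, map_mul, map_neg] at hx this ⊢
  linear_combination algebraMap Γ K lam * hx + this

theorem mul_self_eq_of_mul_sq_eq (hπ : IsUnit (algebraMap Γ K (algebraMap O Γ π)))
    (hlam : lam ^ (m + 2) = -algebraMap O Γ (π ^ 4 * u))
    (hx : x * algebraMap Γ K (algebraMap O Γ (π ^ 2)) = algebraMap Γ K (lam ^ (m + 1))) :
    x * x = algebraMap Γ K (-(algebraMap O Γ u * lam ^ m)) := by
  refine (hπ.pow 4).mul_right_cancel ?_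
  have := congrArg (fun z => algebraMap Γ K (z * lam ^ m)) hlam
  simp only [map_pow, map_mul, map_neg] at hx this ⊢
  linear_combination
    (x * algebraMap Γ K (algebraMap O Γ π) ^ 2 + algebraMap Γ K lam ^ (m + 1)) * hx + this

theorem exists_add_mul_add_mul_iff {r : O} {x' y : K}
    (hx' : x' = x * algebraMap Γ K (algebraMap O Γ r)) :
    (∃ (g : Γ) (o₁ o₂ : O), y = algebraMap Γ K g + x' * algebraMap Γ K (algebraMap O Γ o₁)
        + x * algebraMap Γ K (algebraMap O Γ o₂)) ↔
      ∃ (g : Γ) (o : O), y = algebraMap Γ K g + x * algebraMap Γ K (algebraMap O Γ o) := by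
  refine ⟨fun ⟨g, o₁, o₂, hy⟩ => ⟨g, r * o₁ + o₂, ?_⟩, fun ⟨g, o, hy⟩ => ⟨g, 0, o, by simpa⟩⟩
  rw [hy, hx']
  simp only [map_add, map_mul]
  ring

end QuotientByUniformizer

theorem stmt_6_general (p : ℕ) (hp5 : 5 ≤ p)
    (O : Type) [CommRing O]
    (π : O) (he : π ^ 4 ∣ (p : O))
    (Γ : Type) [CommRing Γ] [Algebra O Γ]
    (lam : Γ) (hlam : lam ^ (p - 1) = -(p : Γ))
    (b : Module.Basis (Fin (p - 1)) O Γ) (hb : ∀ i : Fin (p - 1), b i = lam ^ (i : ℕ))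
    (hπΓ : algebraMap O Γ π ∈ nonZeroDivisors Γ)
    (x₁ x₂ : FractionRing Γ)
    (hx₁ : x₁ * algebraMap Γ (FractionRing Γ) (algebraMap O Γ π)
        = algebraMap Γ (FractionRing Γ) (lam ^ (p - 2)))
    (hx₂ : x₂ * algebraMap Γ (FractionRing Γ) (algebraMap O Γ (π ^ 2))
        = algebraMap Γ (FractionRing Γ) (lam ^ (p - 2)))
    (T : Set (FractionRing Γ))
    (hT : T = {y | ∃ (g : Γ) (o₁ o₂ : O),
        y = algebraMap Γ (FractionRing Γ) g
          + x₁ * algebraMap Γ (FractionRing Γ) (algebraMap O Γ o₁)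
          + x₂ * algebraMap Γ (FractionRing Γ) (algebraMap O Γ o₂)}) :
    (∀ a ∈ T, ∀ c ∈ T, a * c ∈ T) ∧
    (∀ t ∈ T, algebraMap Γ (FractionRing Γ) (algebraMap O Γ (π ^ 2)) * t
        ∈ Set.range (algebraMap Γ (FractionRing Γ))) ∧
    Set.range (algebraMap Γ (FractionRing Γ)) ⊆ T := by
  obtain ⟨m, rfl⟩ : ∃ m, p = m + 3 := ⟨p - 3, by omega⟩
  obtain ⟨u, hu⟩ := he
  have hπ : IsUnit (algebraMap Γ (FractionRing Γ) (algebraMap O Γ π)) :=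
    IsLocalization.map_units (FractionRing Γ) (⟨_, hπΓ⟩ : nonZeroDivisors Γ)
  have hlam' : lam ^ (m + 2) = -algebraMap O Γ (π ^ 4 * u) := by
    rw [← hu, map_natCast]
    exact hlam
  have hx₁₂ : x₁ = x₂ * algebraMap Γ _ (algebraMap O Γ π) := by
    refine hπ.mul_right_cancel ?_
    rw [map_pow, map_pow] at hx₂
    linear_combination hx₁ - hx₂
  have hdec := exists_eq_algebraMap_add_mul_of_adjoin_eq_top
    (adjoin_singleton_eq_top_of_basis lam b _ hb)
  have hmem : ∀ y, y ∈ T ↔ y ∈ span Γ {1, x₂} := fun y => by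
    rw [hT, Set.mem_ofPred_eq, exists_add_mul_add_mul_iff hx₁₂,
      mem_span_one_pair_iff_of_forall_eq_algebraMap_add_mul hdec
        ⟨_, (algebraMap_mul_eq_of_mul_sq_eq hπ hlam' hx₂).symm⟩]
  refine ⟨fun a ha c hc => ?_, fun t ht => ?_, ?_⟩
  · rw [hmem] at ha hc ⊢
    exact mul_mem_span_one_pair ⟨_, (mul_self_eq_of_mul_sq_eq hπ hlam' hx₂).symm⟩ ha hc
  · exact algebraMap_mul_mem_range_of_mem_span_one_pair ⟨_, by rw [mul_comm, hx₂]⟩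
      ((hmem t).1 ht)
  · rintro _ ⟨g, rfl⟩
    exact (hmem _).2 (mem_span_one_pair_iff.2 ⟨g, 0, by simp⟩)

/-- Let `p ≥ 5` be prime, `O` a complete DVR with uniformizer `π` and
ramification index `e ≥ 4` over `ℤ_p` (so `π^4 ∣ p`), `Γ = O ⊗ ℤ_p[ζ_p]` (free over `O`
with basis `λ^i`, `0 ≤ i ≤ p-2`, where `λ^(p-1) = -p`), `x₁ = λ^(p-2)/π`,
`x₂ = λ^(p-2)/π²`. Then `T = Γ + x₁O + x₂O` is an `O`-subalgebra of the total
fraction ring of `Γ` (i.e. it is closed under multiplication), and `π²T ⊆ Γ ⊆ T`. -/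
theorem stmt_6 (p : ℕ) (hp : p.Prime) (hp5 : 5 ≤ p)
    (O : Type) [CommRing O] [IsDomain O] [IsDiscreteValuationRing O] [CharZero O]
    [IsAdicComplete (IsLocalRing.maximalIdeal O) O]
    (π : O) (hπ : Irreducible π) (he : π ^ 4 ∣ (p : O))
    (Γ : Type) [CommRing Γ] [Algebra O Γ]
    (lam : Γ) (hlam : lam ^ (p - 1) = -(p : Γ))
    (b : Module.Basis (Fin (p - 1)) O Γ) (hb : ∀ i : Fin (p - 1), b i = lam ^ (i : ℕ))
    (hπΓ : algebraMap O Γ π ∈ nonZeroDivisors Γ)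
    (x₁ x₂ : FractionRing Γ)
    (hx₁ : x₁ * algebraMap Γ (FractionRing Γ) (algebraMap O Γ π)
        = algebraMap Γ (FractionRing Γ) (lam ^ (p - 2)))
    (hx₂ : x₂ * algebraMap Γ (FractionRing Γ) (algebraMap O Γ (π ^ 2))
        = algebraMap Γ (FractionRing Γ) (lam ^ (p - 2)))
    (T : Set (FractionRing Γ))
    (hT : T = {y | ∃ (g : Γ) (o₁ o₂ : O),
        y = algebraMap Γ (FractionRing Γ) g
          + x₁ * algebraMap Γ (FractionRing Γ) (algebraMap O Γ o₁)
          + x₂ * algebraMap Γ (FractionRing Γ) (algebraMap O Γ o₂)}) :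
    (∀ a ∈ T, ∀ c ∈ T, a * c ∈ T) ∧
    (∀ t ∈ T, algebraMap Γ (FractionRing Γ) (algebraMap O Γ (π ^ 2)) * t
        ∈ Set.range (algebraMap Γ (FractionRing Γ))) ∧
    Set.range (algebraMap Γ (FractionRing Γ)) ⊆ T :=
  stmt_6_general p hp5 O π he Γ lam hlam b hb hπΓ x₁ x₂ hx₁ hx₂ T hT
end

section
/- Let p = 7 and let O be a complete DVR with uniformizer π and ramification index e = 3 over ℤ_7, Γ = O ⊗ ℤ_7[ζ_7] where λ^6 = -7. Set x₁ = λ⁵/π, x₂ = λ⁵/π², x₃ = λ⁴/π. Then T = Γ + x₁O + x₂O + x₃O is an O-subalgebra of the total fraction ring of Γ. -/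
/-!
Write `7 = π³u`. Since `λ⁶ = -π³u`, the `λ`-multiples of the new generators are
`λx₁ = -π²u`, `λx₂ = -πu` and `λx₃ = x₁`, so `T` is stable under `λ`, hence under `Γ = O[λ]`,
and `T` is the `Γ`-module spanned by `1, x₁, x₂, x₃`. It is then closed under multiplication as
soon as the products of the generators lie in it, and indeed `x₁² = -πuλ⁴`, `x₁x₂ = -uλ⁴`,
`x₁x₃ = -πuλ³`, `x₂² = -u x₃`, `x₂x₃ = -uλ³`, `x₃² = -πuλ²`.
-/

open Submodule

theorem Submodule.mul_mem_span_insert_one {A K : Type*} [CommSemiring A] [Semiring K]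
    [Algebra A K] {s : Set K} (hs : ∀ x ∈ s, ∀ y ∈ s, x * y ∈ span A (insert 1 s)) {a c : K}
    (ha : a ∈ span A (insert 1 s)) (hc : c ∈ span A (insert 1 s)) :
    a * c ∈ span A (insert 1 s) := by
  have hmul : span A (insert 1 s) * span A (insert 1 s) ≤ span A (insert 1 s) := by
    rw [span_mul_span, span_le]
    rintro _ ⟨x, hx, y, hy, rfl⟩
    rcases hx with rfl | hx
    · simpa using subset_span hy
    rcases hy with rfl | hy
    · simpa using subset_span (Set.mem_insert_of_mem 1 hx)
    exact hs x hx y hy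
  exact hmul (mul_mem_mul ha hc)

theorem smul_mem_of_adjoin_singleton_eq_top {R A M : Type*} [CommSemiring R] [Semiring A]
    [Algebra R A] [AddCommMonoid M] [Module A M] {x : A} (hx : Algebra.adjoin R {x} = ⊤)
    {S : Set M} (hadd : ∀ y ∈ S, ∀ z ∈ S, y + z ∈ S)
    (halgebraMap : ∀ (r : R), ∀ y ∈ S, algebraMap R A r • y ∈ S)
    (hxS : ∀ y ∈ S, x • y ∈ S) (a : A) : ∀ y ∈ S, a • y ∈ S := by
  have ha : a ∈ Algebra.adjoin R {x} := hx ▸ Algebra.mem_top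
  induction ha using Algebra.adjoin_induction with
  | mem z hz => rwa [Set.mem_singleton_iff.1 hz]
  | algebraMap r => exact halgebraMap r
  | add a b _ _ ha hb => exact fun y hy => add_smul a b y ▸ hadd _ (ha y hy) _ (hb y hy)
  | mul a b _ _ ha hb => exact fun y hy => mul_smul a b y ▸ ha _ (hb y hy)

section ExtendedOrder

variable (O Γ : Type*) {K : Type*} [CommRing O] [CommRing Γ] [CommRing K] [Algebra O Γ]
  [Algebra Γ K]

def extendedOrder (x₁ x₂ x₃ : K) : Set K :=
  {y | ∃ (g : Γ) (o₁ o₂ o₃ : O), y = algebraMap Γ K g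
    + x₁ * algebraMap Γ K (algebraMap O Γ o₁)
    + x₂ * algebraMap Γ K (algebraMap O Γ o₂)
    + x₃ * algebraMap Γ K (algebraMap O Γ o₃)}

variable {O Γ} {x₁ x₂ x₃ : K}

theorem add_mem_extendedOrder :
    ∀ y ∈ extendedOrder O Γ x₁ x₂ x₃, ∀ z ∈ extendedOrder O Γ x₁ x₂ x₃,
      y + z ∈ extendedOrder O Γ x₁ x₂ x₃ := by
  rintro _ ⟨g, o₁, o₂, o₃, rfl⟩ _ ⟨h, p₁, p₂, p₃, rfl⟩
  exact ⟨g + h, o₁ + p₁, o₂ + p₂, o₃ + p₃, by simp only [map_add]; ring⟩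

theorem algebraMap_smul_mem_extendedOrder (o : O) :
    ∀ y ∈ extendedOrder O Γ x₁ x₂ x₃, algebraMap O Γ o • y ∈ extendedOrder O Γ x₁ x₂ x₃ := by
  rintro _ ⟨g, o₁, o₂, o₃, rfl⟩
  exact ⟨algebraMap O Γ o * g, o * o₁, o * o₂, o * o₃,
    by simp only [Algebra.smul_def, map_mul]; ring⟩

theorem extendedOrder_subset_span :
    extendedOrder O Γ x₁ x₂ x₃ ⊆ span Γ {1, x₁, x₂, x₃} := by
  have hsmul : ∀ (γ : Γ) {z : K}, z ∈ ({1, x₁, x₂, x₃} : Set K) →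
      z * algebraMap Γ K γ ∈ span Γ {1, x₁, x₂, x₃} := fun γ z hz => by
    rw [mul_comm, ← Algebra.smul_def]
    exact smul_mem _ γ (subset_span hz)
  rintro _ ⟨g, o₁, o₂, o₃, rfl⟩
  refine add_mem (add_mem (add_mem ?_ (hsmul _ (by simp))) (hsmul _ (by simp)))
    (hsmul _ (by simp))
  simpa using hsmul g (Set.mem_insert 1 _)

theorem span_subset_extendedOrder
    (hsmul : ∀ (γ : Γ), ∀ y ∈ extendedOrder O Γ x₁ x₂ x₃, γ • y ∈ extendedOrder O Γ x₁ x₂ x₃) :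
    (span Γ {1, x₁, x₂, x₃} : Set K) ⊆ extendedOrder O Γ x₁ x₂ x₃ := by
  let M : Submodule Γ K :=
    { carrier := extendedOrder O Γ x₁ x₂ x₃
      add_mem' := fun hy hz => add_mem_extendedOrder _ hy _ hz
      zero_mem' := ⟨0, 0, 0, 0, by simp⟩
      smul_mem' := fun γ y hy => hsmul γ y hy }
  refine span_le (p := M) |>.2 ?_
  rintro _ (rfl | rfl | rfl | rfl)
  · exact ⟨1, 0, 0, 0, by simp⟩
  · exact ⟨0, 1, 0, 0, by simp⟩
  · exact ⟨0, 0, 1, 0, by simp⟩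
  · exact ⟨0, 0, 0, 1, by simp⟩

variable {π u : O} {lam : Γ} {Q : K}

theorem lam_smul_mem_extendedOrder (hQ : algebraMap Γ K (algebraMap O Γ π) * Q = 1)
    (h7 : lam ^ 6 = -algebraMap O Γ (π ^ 3 * u))
    (hx₁ : x₁ = algebraMap Γ K lam ^ 5 * Q) (hx₂ : x₂ = algebraMap Γ K lam ^ 5 * Q ^ 2)
    (hx₃ : x₃ = algebraMap Γ K lam ^ 4 * Q) :
    ∀ y ∈ extendedOrder O Γ x₁ x₂ x₃, lam • y ∈ extendedOrder O Γ x₁ x₂ x₃ := by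
  rintro _ ⟨g, o₁, o₂, o₃, rfl⟩
  refine ⟨lam * g - algebraMap O Γ (π ^ 2 * u * o₁ + π * u * o₂), o₃, 0, 0, ?_⟩
  have hL := congrArg (algebraMap Γ K) h7
  subst hx₁ hx₂ hx₃
  simp only [Algebra.smul_def, map_add, map_sub, map_mul, map_pow, map_neg, map_zero] at hL ⊢
  set P := algebraMap Γ K (algebraMap O Γ π)
  set U := algebraMap Γ K (algebraMap O Γ u)
  set O₁ := algebraMap Γ K (algebraMap O Γ o₁)
  set O₂ := algebraMap Γ K (algebraMap O Γ o₂)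
  linear_combination (O₁ * Q + O₂ * Q ^ 2) * hL - (O₁ * P ^ 2 * U + O₂ * P * U * (P * Q + 1)) * hQ

theorem generator_mul_mem_span (hQ : algebraMap Γ K (algebraMap O Γ π) * Q = 1)
    (h7 : lam ^ 6 = -algebraMap O Γ (π ^ 3 * u))
    (hx₁ : x₁ = algebraMap Γ K lam ^ 5 * Q) (hx₂ : x₂ = algebraMap Γ K lam ^ 5 * Q ^ 2)
    (hx₃ : x₃ = algebraMap Γ K lam ^ 4 * Q) :
    ∀ x ∈ ({x₁, x₂, x₃} : Set K), ∀ y ∈ ({x₁, x₂, x₃} : Set K),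
      x * y ∈ span Γ {1, x₁, x₂, x₃} := by
  have hΓ (γ : Γ) : algebraMap Γ K γ ∈ span Γ {1, x₁, x₂, x₃} := by
    simpa [Algebra.smul_def] using smul_mem _ γ (subset_span (Set.mem_insert (1 : K) _))
  have hL := congrArg (algebraMap Γ K) h7
  simp only [map_pow, map_neg, map_mul] at hL
  set P := algebraMap Γ K (algebraMap O Γ π)
  set U := algebraMap Γ K (algebraMap O Γ u)
  set L := algebraMap Γ K lam
  have h11 : x₁ * x₁ = algebraMap Γ K (-(algebraMap O Γ (π * u) * lam ^ 4)) := by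
    simp only [map_neg, map_mul, map_pow]
    linear_combination (x₁ + L ^ 5 * Q) * hx₁ + L ^ 4 * Q ^ 2 * hL
      - P * U * L ^ 4 * (P * Q + 1) * hQ
  have h12 : x₁ * x₂ = algebraMap Γ K (-(algebraMap O Γ u * lam ^ 4)) := by
    simp only [map_neg, map_mul, map_pow]
    linear_combination x₂ * hx₁ + L ^ 5 * Q * hx₂ + L ^ 4 * Q ^ 3 * hL
      - U * L ^ 4 * (P ^ 2 * Q ^ 2 + P * Q + 1) * hQ
  have h13 : x₁ * x₃ = algebraMap Γ K (-(algebraMap O Γ (π * u) * lam ^ 3)) := by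
    simp only [map_neg, map_mul, map_pow]
    linear_combination x₃ * hx₁ + L ^ 5 * Q * hx₃ + L ^ 3 * Q ^ 2 * hL
      - P * U * L ^ 3 * (P * Q + 1) * hQ
  have h22 : x₂ * x₂ = -algebraMap O Γ u • x₃ := by
    simp only [Algebra.smul_def, map_neg]
    linear_combination (x₂ + L ^ 5 * Q ^ 2) * hx₂ + U * hx₃ + L ^ 4 * Q ^ 4 * hL
      - U * L ^ 4 * Q * (P ^ 2 * Q ^ 2 + P * Q + 1) * hQ
  have h23 : x₂ * x₃ = algebraMap Γ K (-(algebraMap O Γ u * lam ^ 3)) := by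
    simp only [map_neg, map_mul, map_pow]
    linear_combination x₃ * hx₂ + L ^ 5 * Q ^ 2 * hx₃ + L ^ 3 * Q ^ 3 * hL
      - U * L ^ 3 * (P ^ 2 * Q ^ 2 + P * Q + 1) * hQ
  have h33 : x₃ * x₃ = algebraMap Γ K (-(algebraMap O Γ (π * u) * lam ^ 2)) := by
    simp only [map_neg, map_mul, map_pow]
    linear_combination (x₃ + L ^ 4 * Q) * hx₃ + L ^ 2 * Q ^ 2 * hL
      - P * U * L ^ 2 * (P * Q + 1) * hQ
  rintro x (rfl | rfl | rfl) y (rfl | rfl | rfl)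
  · exact h11 ▸ hΓ _
  · exact h12 ▸ hΓ _
  · exact h13 ▸ hΓ _
  · rw [mul_comm]; exact h12 ▸ hΓ _
  · exact h22 ▸ smul_mem _ _ (subset_span (by simp))
  · exact h23 ▸ hΓ _
  · rw [mul_comm]; exact h13 ▸ hΓ _
  · rw [mul_comm]; exact h23 ▸ hΓ _
  · exact h33 ▸ hΓ _

end ExtendedOrder

theorem stmt_7_general
    (O : Type) [CommRing O]
    (π : O) (he : π ^ 3 ∣ (7 : O))
    (Γ : Type) [CommRing Γ] [Algebra O Γ]
    (lam : Γ) (hlam : lam ^ 6 = -(7 : Γ))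
    (b : Module.Basis (Fin 6) O Γ) (hb : ∀ i : Fin 6, b i = lam ^ (i : ℕ))
    (hπΓ : algebraMap O Γ π ∈ nonZeroDivisors Γ)
    (x₁ x₂ x₃ : FractionRing Γ)
    (hx₁ : x₁ * algebraMap Γ (FractionRing Γ) (algebraMap O Γ π)
        = algebraMap Γ (FractionRing Γ) (lam ^ 5))
    (hx₂ : x₂ * algebraMap Γ (FractionRing Γ) (algebraMap O Γ (π ^ 2))
        = algebraMap Γ (FractionRing Γ) (lam ^ 5))
    (hx₃ : x₃ * algebraMap Γ (FractionRing Γ) (algebraMap O Γ π)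
        = algebraMap Γ (FractionRing Γ) (lam ^ 4))
    (T : Set (FractionRing Γ))
    (hT : T = {y | ∃ (g : Γ) (o₁ o₂ o₃ : O),
        y = algebraMap Γ (FractionRing Γ) g
          + x₁ * algebraMap Γ (FractionRing Γ) (algebraMap O Γ o₁)
          + x₂ * algebraMap Γ (FractionRing Γ) (algebraMap O Γ o₂)
          + x₃ * algebraMap Γ (FractionRing Γ) (algebraMap O Γ o₃)}) :
    ∀ a ∈ T, ∀ c ∈ T, a * c ∈ T := by
  obtain ⟨u, hu⟩ := he
  have h7 : lam ^ 6 = -algebraMap O Γ (π ^ 3 * u) := by rw [hlam, ← hu, map_ofNat]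
  obtain ⟨Q, hQ⟩ := (IsLocalization.map_units (FractionRing Γ) ⟨_, hπΓ⟩).exists_right_inv
  simp only [map_pow] at hx₁ hx₂ hx₃
  have hx₁' : x₁ = algebraMap Γ _ lam ^ 5 * Q := by linear_combination Q * hx₁ - x₁ * hQ
  have hx₂' : x₂ = algebraMap Γ _ lam ^ 5 * Q ^ 2 := by
    linear_combination Q ^ 2 * hx₂
      - x₂ * (algebraMap Γ _ (algebraMap O Γ π) * Q + 1) * hQ
  have hx₃' : x₃ = algebraMap Γ _ lam ^ 4 * Q := by linear_combination Q * hx₃ - x₃ * hQ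
  have hT_span : T = span Γ {1, x₁, x₂, x₃} := by
    subst hT
    refine subset_antisymm extendedOrder_subset_span (span_subset_extendedOrder fun γ =>
      smul_mem_of_adjoin_singleton_eq_top (PowerBasis.mk lam 6 b hb).adjoin_gen_eq_top
        add_mem_extendedOrder algebraMap_smul_mem_extendedOrder ?_ γ)
    exact lam_smul_mem_extendedOrder hQ h7 hx₁' hx₂' hx₃'
  rw [hT_span]
  exact fun a ha c hc =>
    mul_mem_span_insert_one (generator_mul_mem_span hQ h7 hx₁' hx₂' hx₃') ha hc

/-- Let `p = 7` and let `O` be a complete DVR with uniformizer `π` and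
ramification index `e = 3` over `ℤ_7` (so that `7/π³ ∈ O`), and `Γ = O ⊗ ℤ_7[ζ_7]`
(free over `O` with basis `1, λ, …, λ⁵`, where `λ⁶ = -7`). Set `x₁ = λ⁵/π`,
`x₂ = λ⁵/π²`, `x₃ = λ⁴/π`. Then `T = Γ + x₁O + x₂O + x₃O` is an `O`-subalgebra of
the total fraction ring of `Γ` (i.e. it is closed under multiplication). -/
theorem stmt_7
    (O : Type) [CommRing O] [IsDomain O] [IsDiscreteValuationRing O] [CharZero O]
    [IsAdicComplete (IsLocalRing.maximalIdeal O) O]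
    (π : O) (hπ : Irreducible π) (he : π ^ 3 ∣ (7 : O))
    (Γ : Type) [CommRing Γ] [Algebra O Γ]
    (lam : Γ) (hlam : lam ^ 6 = -(7 : Γ))
    (b : Module.Basis (Fin 6) O Γ) (hb : ∀ i : Fin 6, b i = lam ^ (i : ℕ))
    (hπΓ : algebraMap O Γ π ∈ nonZeroDivisors Γ)
    (x₁ x₂ x₃ : FractionRing Γ)
    (hx₁ : x₁ * algebraMap Γ (FractionRing Γ) (algebraMap O Γ π)
        = algebraMap Γ (FractionRing Γ) (lam ^ 5))
    (hx₂ : x₂ * algebraMap Γ (FractionRing Γ) (algebraMap O Γ (π ^ 2))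
        = algebraMap Γ (FractionRing Γ) (lam ^ 5))
    (hx₃ : x₃ * algebraMap Γ (FractionRing Γ) (algebraMap O Γ π)
        = algebraMap Γ (FractionRing Γ) (lam ^ 4))
    (T : Set (FractionRing Γ))
    (hT : T = {y | ∃ (g : Γ) (o₁ o₂ o₃ : O),
        y = algebraMap Γ (FractionRing Γ) g
          + x₁ * algebraMap Γ (FractionRing Γ) (algebraMap O Γ o₁)
          + x₂ * algebraMap Γ (FractionRing Γ) (algebraMap O Γ o₂)
          + x₃ * algebraMap Γ (FractionRing Γ) (algebraMap O Γ o₃)}) :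
    ∀ a ∈ T, ∀ c ∈ T, a * c ∈ T :=
  stmt_7_general O π he Γ lam hlam b hb hπΓ x₁ x₂ x₃ hx₁ hx₂ hx₃ T hT
end

section
/- Let p be a prime and R a commutative ring. Define the truncated exponential [exp](z) = Σ_{i=0}^{p-1} z^i / i! (well-defined when the denominators i! for i < p are invertible or R is a ℤ_(p)-algebra). If a, b ∈ R and the ideal (a, b) satisfies (a,b)^p = 0, then [exp](a + b) = [exp](a) · [exp](b). -/
/-!
Expand `[exp](a + b)` by the binomial theorem: the coefficient of `a ^ i * b ^ j` with `i + j < p`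
is `(i + j).choose i / (i + j)! = 1 / (i! * j!)`, exactly as in `[exp](a) · [exp](b)`.
The product `[exp](a) · [exp](b)` has the additional monomials `a ^ i * b ^ j` with `i + j ≥ p`,
and these lie in `(a, b) ^ p = 0`.
-/

open Finset
open scoped Nat

variable {R : Type*}

theorem Ideal.pow_mul_pow_eq_zero_of_pow_eq_bot [CommSemiring R] {I : Ideal R} {n : ℕ}
    (hI : I ^ n = ⊥) {a b : R} (ha : a ∈ I) (hb : b ∈ I) {i j : ℕ} (hij : n ≤ i + j) :
    a ^ i * b ^ j = 0 := by
  have hmem : a ^ i * b ^ j ∈ I ^ (i + j) := by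
    rw [pow_add]
    exact Ideal.mul_mem_mul (Ideal.pow_mem_pow ha i) (Ideal.pow_mem_pow hb j)
  simpa [hI] using Ideal.pow_le_pow_right hij hmem

theorem inverse_factorial_add_mul_choose [CommRing R] {i j : ℕ} (hi : IsUnit (i ! : R))
    (hj : IsUnit (j ! : R)) (hij : IsUnit ((i + j)! : R)) :
    Ring.inverse ((i + j)! : R) * (i + j).choose i =
      Ring.inverse (i ! : R) * Ring.inverse (j ! : R) := by
  have hfact : ((i + j).choose i : R) * (i ! * j !) = (i + j)! := by
    rw [Nat.choose_symm_add, ← mul_assoc, ← Nat.cast_mul, ← Nat.cast_mul,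
      Nat.add_choose_mul_factorial_mul_factorial]
  refine (hi.mul hj).mul_left_inj.mp ?_
  rw [mul_assoc, hfact, Ring.inverse_mul_cancel _ hij, mul_mul_mul_comm,
    Ring.inverse_mul_cancel _ hi, Ring.inverse_mul_cancel _ hj, one_mul]

noncomputable def truncExp [CommRing R] (n : ℕ) (x : R) : R :=
  ∑ i ∈ range n, Ring.inverse (i ! : R) * x ^ i

theorem truncExp_add [CommRing R] {n : ℕ} (hinv : ∀ i < n, IsUnit (i ! : R)) {a b : R}
    (hab : ∀ i j, n ≤ i + j → a ^ i * b ^ j = 0) :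
    truncExp n (a + b) = truncExp n a * truncExp n b := by
  set F : ℕ × ℕ → R := fun x =>
    Ring.inverse (x.1 ! : R) * a ^ x.1 * (Ring.inverse (x.2 ! : R) * b ^ x.2)
  have hfibers : ∀ k ∈ range n,
      {x ∈ range n ×ˢ range n | x.1 + x.2 < n ∧ x.1 + x.2 = k} = antidiagonal k := by
    intro k hk
    ext x
    simp only [mem_filter, mem_product, mem_range, HasAntidiagonal.mem_antidiagonal] at hk ⊢
    omega
  calc truncExp n (a + b)
    _ = ∑ k ∈ range n, ∑ x ∈ antidiagonal k, F x := by
      refine sum_congr rfl fun k hk => ?_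
      rw [(Commute.all a b).add_pow', mul_sum]
      refine sum_congr rfl fun x hx => ?_
      rw [HasAntidiagonal.mem_antidiagonal] at hx
      subst hx
      have hk' := mem_range.mp hk
      rw [nsmul_eq_mul, ← mul_assoc, inverse_factorial_add_mul_choose (hinv _ (by omega))
        (hinv _ (by omega)) (hinv _ hk')]
      ring
    _ = ∑ x ∈ range n ×ˢ range n with x.1 + x.2 < n, F x := by
      rw [← sum_fiberwise_of_maps_to (g := fun x : ℕ × ℕ => x.1 + x.2) (t := range n)
        (fun x hx => mem_range.mpr (mem_filter.mp hx).2)]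
      refine sum_congr rfl fun k hk => ?_
      rw [filter_filter, hfibers k hk]
    _ = ∑ x ∈ range n ×ˢ range n, F x := by
      refine sum_filter_of_ne fun x _ hFx => ?_
      by_contra! hx
      refine hFx ?_
      simp only [F]
      linear_combination (Ring.inverse (x.1 ! : R) * Ring.inverse (x.2 ! : R)) * hab x.1 x.2 hx
    _ = truncExp n a * truncExp n b := by
      rw [sum_product, truncExp, truncExp, sum_mul_sum]

theorem stmt_8_general (p : ℕ) (R : Type) [CommRing R]
    (hinv : ∀ i < p, IsUnit ((i : ℕ).factorial : R))
    (a b : R) (hab : (Ideal.span {a, b} : Ideal R) ^ p = ⊥) :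
    (∑ i ∈ Finset.range p, Ring.inverse ((i.factorial : R)) * (a + b) ^ i)
      = (∑ i ∈ Finset.range p, Ring.inverse ((i.factorial : R)) * a ^ i)
      * (∑ i ∈ Finset.range p, Ring.inverse ((i.factorial : R)) * b ^ i) :=
  truncExp_add hinv fun _ _ =>
    Ideal.pow_mul_pow_eq_zero_of_pow_eq_bot hab (Ideal.subset_span (by simp))
      (Ideal.subset_span (by simp))

/-- Let `p` be a prime and `R` a commutative ring in which the factorials
`i!` for `i < p` are invertible. Define the truncated exponential
`[exp](z) = Σ_{i=0}^{p-1} z^i / i!`. If `a, b ∈ R` and the ideal `(a, b)` generated by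
`a` and `b` satisfies `(a,b)^p = 0`, then `[exp](a + b) = [exp](a) · [exp](b)`. -/
theorem stmt_8 (p : ℕ) (hp : p.Prime) (R : Type) [CommRing R]
    (hinv : ∀ i < p, IsUnit ((i : ℕ).factorial : R))
    (a b : R) (hab : (Ideal.span {a, b} : Ideal R) ^ p = ⊥) :
    (∑ i ∈ Finset.range p, Ring.inverse ((i.factorial : R)) * (a + b) ^ i)
      = (∑ i ∈ Finset.range p, Ring.inverse ((i.factorial : R)) * a ^ i)
      * (∑ i ∈ Finset.range p, Ring.inverse ((i.factorial : R)) * b ^ i) :=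
  stmt_8_general p R hinv a b hab
end

section
/- Let p be a prime, R a commutative ℤ_(p)-algebra, and x ∈ R with px = 0 and x^p = 0. Then y = [exp](x) = Σ_{i=0}^{p-1} x^i/i! satisfies y^p = 1; in particular y is a unit of R. -/
/-- Let `p` be a prime and `R` a commutative ring in which the factorials
`i!` for `i < p` are invertible (e.g. a `ℤ_(p)`-algebra). Let `x ∈ R` with `p·x = 0` and
the ideal `(x)` satisfying `(x)^p = 0`. Then `y = [exp](x) = Σ_{i=0}^{p-1} x^i/i!`
satisfies `y^p = 1`; in particular `y` is a unit of `R`. -/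
theorem stmt_9 (p : ℕ) (hp : p.Prime) (R : Type) [CommRing R]
    (hinv : ∀ i < p, IsUnit ((i : ℕ).factorial : R))
    (x : R) (hx : (Ideal.span {x} : Ideal R) ^ p = ⊥) (hpx : (p : R) * x = 0) :
    (∑ i ∈ Finset.range p, Ring.inverse ((i.factorial : R)) * x ^ i) ^ p = 1 ∧
    IsUnit (∑ i ∈ Finset.range p, Ring.inverse ((i.factorial : R)) * x ^ i) := by
  have hp0 : 0 < p := hp.pos
  have hx0 : x ^ p = 0 := by
    have h1 : x ^ p ∈ (Ideal.span {x} : Ideal R) ^ p :=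
      Ideal.pow_mem_pow (Ideal.mem_span_singleton_self x) p
    rw [hx] at h1
    simpa using h1
  set a : ℕ → R := fun i => Ring.inverse ((i.factorial : R)) * x ^ i with ha
  -- the distinguished index function
  set k₀ : ℕ → ℕ := fun i => if i = 0 then p else 0 with hk₀
  have hmain : (∑ i ∈ Finset.range p, a i) ^ p = 1 := by
    rw [Finset.sum_pow_eq_sum_piAntidiag]
    rw [Finset.sum_eq_single k₀]
    · -- the term at k₀ equals 1
      have hmult : Nat.multinomial (Finset.range p) k₀ = 1 := by
        have hspec := Nat.multinomial_spec (Finset.range p) k₀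
        have hprod : (∏ i ∈ Finset.range p, (k₀ i).factorial) = p.factorial := by
          rw [Finset.prod_eq_single_of_mem 0 (Finset.mem_range.2 hp0)]
          · simp [hk₀]
          · intro i _ hi; simp [hk₀, hi]
        have hsum : (∑ i ∈ Finset.range p, k₀ i) = p := by
          rw [Finset.sum_eq_single_of_mem 0 (Finset.mem_range.2 hp0)]
          · simp [hk₀]
          · intro i _ hi; simp [hk₀, hi]
        rw [hprod, hsum] at hspec
        have := Nat.factorial_pos p
        nlinarith [Nat.multinomial_pos (Finset.range p) k₀]
      have hprodR : (∏ i ∈ Finset.range p, a i ^ k₀ i) = 1 := by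
        rw [Finset.prod_eq_single_of_mem 0 (Finset.mem_range.2 hp0)]
        · simp [ha, hk₀]
        · intro i _ hi; simp [hk₀, hi]
      rw [hmult, hprodR]; simp
    · -- all other terms vanish
      intro k hk hne
      rw [Finset.mem_piAntidiag] at hk
      obtain ⟨hksum, hksupp⟩ := hk
      have hksum' : ∑ j ∈ Finset.range p, k j = p := hksum
      -- rewrite the product
      have hprod : (∏ i ∈ Finset.range p, a i ^ k i)
          = (∏ i ∈ Finset.range p, (Ring.inverse ((i.factorial : R))) ^ k i)
            * x ^ (∑ i ∈ Finset.range p, i * k i) := by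
        rw [← Finset.prod_pow_eq_pow_sum, ← Finset.prod_mul_distrib]
        refine Finset.prod_congr rfl fun i _ => ?_
        rw [ha]; rw [mul_pow, ← pow_mul]
      set d : ℕ := ∑ i ∈ Finset.range p, i * k i with hd
      by_cases hdp : p ≤ d
      · -- x ^ d = 0
        have : x ^ d = 0 := by
          have : x ^ d = x ^ p * x ^ (d - p) := by
            rw [← pow_add]; congr 1; omega
          rw [this, hx0, zero_mul]
        rw [hprod, this, mul_zero, mul_zero]
      · push_neg at hdp
        -- d ≥ 1
        have hd1 : 1 ≤ d := by
          by_contra hd0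
          push_neg at hd0
          interval_cases d
          · -- d = 0 forces k = k₀
            apply hne
            funext i
            rcases eq_or_ne i 0 with rfl | hi
            · have : ∀ j ∈ Finset.range p, j ≠ 0 → k j = 0 := by
                intro j hj hj0
                have := (Finset.sum_eq_zero_iff).1 hd.symm j hj
                rcases Nat.mul_eq_zero.1 this with h | h <;> omega
              have : (∑ i ∈ Finset.range p, k i)
                  = k 0 := by
                rw [Finset.sum_eq_single_of_mem 0 (Finset.mem_range.2 hp0)]
                intro j hj hj0; exact this j hj hj0
              simp only [hk₀, if_pos rfl]
              exact this.symm.trans hksum'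
            · simp only [hk₀, if_neg hi]
              by_contra hki
              have hirange : i ∈ Finset.range p := hksupp i hki
              have := (Finset.sum_eq_zero_iff).1 hd.symm i hirange
              rcases Nat.mul_eq_zero.1 this with h | h <;> omega
        -- all k i < p
        have hklt : ∀ i, k i < p := by
          intro i
          by_contra hki
          push_neg at hki
          by_cases hir : i ∈ Finset.range p
          · have hle : k i ≤ ∑ j ∈ Finset.range p, k j :=
              Finset.single_le_sum (fun j _ => Nat.zero_le _) hir
            have hkip : k i = p := by omega
            -- all other k j = 0
            have hothers : ∀ j ∈ Finset.range p, j ≠ i → k j = 0 := by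
              intro j hj hji
              have hsub : ({j, i} : Finset ℕ) ⊆ Finset.range p :=
                Finset.insert_subset hj (Finset.singleton_subset_iff.2 hir)
              have := Finset.sum_le_sum_of_subset (f := k) hsub
              rw [Finset.sum_insert (by simp [hji]), Finset.sum_singleton, hksum', hkip] at this
              omega
            -- then d = i * p
            have hdi : d = i * p := by
              rw [hd, Finset.sum_eq_single_of_mem i hir, hkip]
              intro j hj hji; rw [hothers j hj hji, mul_zero]
            rcases Nat.eq_zero_or_pos i with rfl | hi1
            · -- i = 0 : k = k₀, contradiction
              apply hne; funext j
              rcases eq_or_ne j 0 with rfl | hj0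
              · simp [hk₀, hkip]
              · simp only [hk₀, if_neg hj0]
                by_contra hkj
                have hjr := hksupp j hkj
                exact hkj (hothers j hjr hj0)
            · -- i ≥ 1 : d ≥ p, contradiction
              have : p ≤ i * p := Nat.le_mul_of_pos_left p hi1
              omega
          · have := hksupp i
            have : k i = 0 := by by_contra h; exact hir (hksupp i h)
            omega
        -- p divides the multinomial coefficient
        have hdvd : p ∣ Nat.multinomial (Finset.range p) k := by
          have hspec := Nat.multinomial_spec (Finset.range p) k
          rw [hksum] at hspec
          have hpdvd : p ∣ (∏ i ∈ Finset.range p, (k i).factorial)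
              * Nat.multinomial (Finset.range p) k := by
            rw [hspec]; exact Nat.dvd_factorial hp0 le_rfl
          rcases (hp.prime.dvd_mul.1 hpdvd) with h | h
          · exfalso
            obtain ⟨i, _, hi⟩ := hp.prime.exists_mem_finset_dvd h
            have := (Nat.Prime.dvd_factorial hp).1 hi
            exact absurd this (not_le.2 (hklt i))
          · exact h
        obtain ⟨m, hm⟩ := hdvd
        rw [hprod, hm]
        have hxd : x ^ d = x * x ^ (d - 1) := by
          rw [← pow_succ']; congr 1; omega
        push_cast
        rw [hxd]
        calc (p : R) * m * ((∏ i ∈ Finset.range p, (Ring.inverse ((i.factorial : R))) ^ k i)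
              * (x * x ^ (d - 1)))
            = ((p : R) * x) * (m * ((∏ i ∈ Finset.range p,
                (Ring.inverse ((i.factorial : R))) ^ k i) * x ^ (d - 1))) := by ring
          _ = 0 := by rw [hpx, zero_mul]
    · -- k₀ is in piAntidiag
      intro h
      exfalso
      apply h
      rw [Finset.mem_piAntidiag]
      constructor
      · rw [Finset.sum_eq_single_of_mem 0 (Finset.mem_range.2 hp0)]
        · simp [hk₀]
        · intro i _ hi; simp [hk₀, hi]
      · intro i hi
        simp only [hk₀] at hi
        by_cases h0 : i = 0
        · subst h0; exact Finset.mem_range.2 hp0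
        · simp [h0] at hi
  refine ⟨hmain, ?_⟩
  exact IsUnit.of_mul_eq_one ((∑ i ∈ Finset.range p, a i) ^ (p - 1)) (by
    rw [← pow_succ']
    have : p - 1 + 1 = p := by omega
    rw [this, hmain])
end

section
/- Let p be an odd prime, Δ = (ℤ/pℤ)^×, Δ₀ ≤ Δ with |Δ₀| > 2, and f ≥ 1. Suppose Δ₀ acts on the cyclic group ⟨ζ_{p^f}⟩ of order p^f compatibly with the action on ⟨ζ_p⟩ via ω|_{Δ₀} on each graded piece. Then the ω^{-1}-eigenspace of ind_{Δ₀}^{Δ} ⟨ζ_{p^f}⟩ is trivial. -/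
lemma cast_toZModPow_eq_toZMod (p : ℕ) [hp : Fact p.Prime] (f : ℕ) (hf : f ≠ 0) (x : ℤ_[p]) :
    ZMod.castHom (dvd_pow_self p hf) (ZMod p) (PadicInt.toZModPow f x) =
      PadicInt.toZMod x := by
  have h1 : (PadicInt.toZModPow f x : ZMod (p ^ f)) = ((x.appr f : ℕ) : ZMod (p ^ f)) := rfl
  have h2 : (PadicInt.toZMod x : ZMod p) = ((x.zmodRepr : ℕ) : ZMod p) := rfl
  rw [h1, h2, map_natCast]
  apply PadicInt.zmod_congr_of_sub_mem_max_ideal x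
  · have := PadicInt.appr_spec f x
    rw [PadicInt.maximalIdeal_eq_span_p]
    have hle : (Ideal.span {(p : ℤ_[p]) ^ f} : Ideal ℤ_[p]) ≤ Ideal.span {(p : ℤ_[p])} := by
      rw [Ideal.span_singleton_le_span_singleton]
      exact dvd_pow_self _ hf
    exact hle this
  · exact PadicInt.sub_zmodRepr_mem x

lemma isUnit_of_cast_ne_zero (p : ℕ) [hp : Fact p.Prime] (f : ℕ) (hf : f ≠ 0)
    (u : ZMod (p ^ f)) (h : ZMod.castHom (dvd_pow_self p hf) (ZMod p) u ≠ 0) :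
    IsUnit u := by
  have : NeZero (p ^ f) := ⟨pow_ne_zero _ hp.out.ne_zero⟩
  have hu : u = ((u.val : ℕ) : ZMod (p ^ f)) := (ZMod.natCast_zmod_val u).symm
  rw [hu, ZMod.isUnit_iff_coprime]
  have hnd : ¬ p ∣ u.val := by
    intro hdvd
    apply h
    rw [hu, map_natCast]
    exact (ZMod.natCast_eq_zero_iff _ _).mpr hdvd
  rw [Nat.coprime_pow_right_iff (Nat.pos_of_ne_zero hf)]
  exact ((Nat.Prime.coprime_iff_not_dvd hp.out).mpr hnd).symm

/-- Let `p` be an odd prime, `Δ = (ℤ/pℤ)ˣ`, `Δ₀ ≤ Δ` with `|Δ₀| > 2`,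
and `f ≥ 1`. Suppose `Δ₀` acts on the cyclic group `⟨ζ_{p^f}⟩ ≅ ℤ/p^f` through a
character `χ : Δ₀ → (ℤ/p^f)ˣ` compatible with the Teichmüller character `ω` on each
graded piece (i.e. `χ ≡ ω mod p`). Then the `ω⁻¹`-eigenspace of
`ind_{Δ₀}^{Δ} ⟨ζ_{p^f}⟩` is trivial. (The induced module is realised as the space of
functions `g : Δ → ℤ/p^f` with `g(d₀·d) = χ(d₀)·g(d)`; the eigenspace condition reads
`g(d·δ) = ω⁻¹(δ)·g(d)`, where `ℤ_p` acts on `ℤ/p^f` via reduction.) -/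
theorem stmt_12 (p : ℕ) [hp : Fact p.Prime] (hodd : p ≠ 2)
    (ω : (ZMod p)ˣ →* ℤ_[p]ˣ)
    (hω : ∀ a : (ZMod p)ˣ, PadicInt.toZMod ((ω a : ℤ_[p])) = (a : ZMod p))
    (Δ₀ : Subgroup (ZMod p)ˣ) (hΔ₀ : 2 < Nat.card Δ₀)
    (f : ℕ) (hf : 1 ≤ f)
    (χ : Δ₀ →* (ZMod (p ^ f))ˣ)
    (hχ : ∀ d₀ : Δ₀, ZMod.castHom (dvd_pow_self p (by omega : f ≠ 0)) (ZMod p)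
        ((χ d₀ : ZMod (p ^ f))) = PadicInt.toZMod ((ω ↑d₀ : ℤ_[p])))
    (g : (ZMod p)ˣ → ZMod (p ^ f))
    (hind : ∀ (d₀ : Δ₀) (d : (ZMod p)ˣ), g (↑d₀ * d) = (χ d₀ : ZMod (p ^ f)) * g d)
    (heig : ∀ (d δ : (ZMod p)ˣ),
      g (d * δ) = PadicInt.toZModPow f (((ω δ)⁻¹ : ℤ_[p]ˣ) : ℤ_[p]) * g d) :
    g = 0 := by
  have hf0 : f ≠ 0 := by omega
  -- Δ₀ is cyclic; pick a generator ζ of order > 2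
  have : Finite Δ₀ := Subgroup.instFiniteSubtypeMem Δ₀
  obtain ⟨ζ, hζ⟩ := IsCyclic.exists_generator (α := Δ₀)
  have hord : orderOf ζ = Nat.card Δ₀ := by
    have : Fintype Δ₀ := Fintype.ofFinite _
    rw [orderOf_eq_card_of_forall_mem_zpowers hζ, Nat.card_eq_fintype_card]
  set δ : (ZMod p)ˣ := (ζ : (ZMod p)ˣ) with hδ
  have hδ2 : δ ^ 2 ≠ 1 := by
    intro h
    have hz2 : ζ ^ 2 = 1 := by
      apply Subtype.ext
      push_cast
      exact h
    have := orderOf_dvd_of_pow_eq_one hz2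
    rw [hord] at this
    have := Nat.le_of_dvd (by norm_num) this
    omega
  -- the key element
  set c : ZMod (p ^ f) := PadicInt.toZModPow f (((ω δ)⁻¹ : ℤ_[p]ˣ) : ℤ_[p]) with hc
  set u : ZMod (p ^ f) := (χ ζ : ZMod (p ^ f)) - c with hu
  -- u annihilates every g d
  have hug : ∀ d : (ZMod p)ˣ, u * g d = 0 := by
    intro d
    have h1 := hind ζ d
    have h2 := heig d δ
    rw [mul_comm d δ] at h2
    rw [hu, sub_mul, ← hδ] at *
    rw [← h1, ← h2, sub_self]
  -- reduction of u mod p is δ - δ⁻¹ ≠ 0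
  have hcast : ZMod.castHom (dvd_pow_self p hf0) (ZMod p) u =
      (δ : ZMod p) - ((δ⁻¹ : (ZMod p)ˣ) : ZMod p) := by
    rw [hu, map_sub]
    have e1 : ZMod.castHom (dvd_pow_self p hf0) (ZMod p) (χ ζ : ZMod (p ^ f)) = (δ : ZMod p) := by
      rw [hχ ζ, hω]
    have e2 : ZMod.castHom (dvd_pow_self p hf0) (ZMod p) c = ((δ⁻¹ : (ZMod p)ˣ) : ZMod p) := by
      rw [hc, cast_toZModPow_eq_toZMod p f hf0]
      have : ((ω δ)⁻¹ : ℤ_[p]ˣ) = ω δ⁻¹ := by rw [← map_inv]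
      rw [this, hω]
    rw [e1, e2]
  have hune : ZMod.castHom (dvd_pow_self p hf0) (ZMod p) u ≠ 0 := by
    rw [hcast, sub_ne_zero]
    intro h
    apply hδ2
    have : δ = δ⁻¹ := Units.ext h
    rw [pow_two]
    nth_rewrite 2 [this]
    exact mul_inv_cancel δ
  have huu : IsUnit u := isUnit_of_cast_ne_zero p f hf0 u hune
  funext d
  have := hug d
  simpa using (huu.mul_right_eq_zero).mp this
end

section
/- Let p ≥ 5 be prime and let ω be the Teichmüller character of Δ = (ℤ/pℤ)^×. Let θ = (1/p) Σ_{j=1}^{p-2} j·σ_j^{-1} be the Stickelberger element and 𝒥 = ℤΔ ∩ θ·ℤΔ the Stickelberger ideal. Then ω^{-1}(𝒥_p) = B_{1,ω}·ℤ_p where 𝒥_p is the p-completion of 𝒥, and B_{1,ω} ≡ 1/12 (mod p); in particular ω^{-1}(𝒥_p) = ℤ_p. -/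
open scoped Padic

section

variable (p : ℕ) [Fact p.Prime]

/-- The Stickelberger element `θ = (1/p) Σ_{j=1}^{p-2} j·σ_j⁻¹` in `ℚ[Δ]`,
`Δ = (ℤ/pℤ)ˣ`. -/
noncomputable def stickelbergerElt : MonoidAlgebra ℚ (ZMod p)ˣ :=
  (p : ℚ)⁻¹ • ∑ δ : (ZMod p)ˣ,
    (if ((δ : ZMod p)).val ≤ p - 2 then ((((δ : ZMod p)).val : ℚ)) else 0) •
      MonoidAlgebra.single δ⁻¹ (1 : ℚ)

/-- The inclusion `ℤ[Δ] → ℚ[Δ]` on coefficients. -/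
noncomputable def intToRatGroupRing (z : MonoidAlgebra ℤ (ZMod p)ˣ) :
    MonoidAlgebra ℚ (ZMod p)ˣ :=
  MonoidAlgebra.ofCoeff (Finsupp.mapRange (Int.cast : ℤ → ℚ) Int.cast_zero z.coeff)

/-- Membership in the Stickelberger ideal `𝒥 = ℤΔ ∩ θ·ℤΔ` of `ℤ[Δ]`. -/
noncomputable def memStickelbergerIdeal (z : MonoidAlgebra ℤ (ZMod p)ˣ) : Prop :=
  ∃ w : MonoidAlgebra ℤ (ZMod p)ˣ,
    intToRatGroupRing p z = stickelbergerElt p * intToRatGroupRing p w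

/-- Evaluation `ω⁻¹ : ℤ[Δ] → ℤ_p` of the group ring at the inverse of the
Teichmüller character `ω`. -/
noncomputable def omegaInvEval (ω : (ZMod p)ˣ →* ℤ_[p]ˣ) :
    MonoidAlgebra ℤ (ZMod p)ˣ →ₐ[ℤ] ℤ_[p] :=
  MonoidAlgebra.lift ℤ ℤ_[p] (ZMod p)ˣ
    ((Units.coeHom ℤ_[p]).comp (invMonoidHom.comp ω))

/-! Write `S = Σ_{a=1}^{p-1} a ω(a)`. Modulo `p`, `S ≡ Σ a² ≡ 0`, so `B_{1,ω} = S / p` lies in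
`ℤ_p`. Reindexing `S` along `a ↦ 2a`, whose least residue is `2a - p` exactly when `a > p/2`,
gives `S = ω(2) (2S - p E)` with `E = Σ_{a > p/2} ω(a)`. Dividing by `p` and reducing modulo `p`,
`B ≡ 2 (2B - Σ_{p/2 < a < p} a)`, and the last sum is `≡ 1/8`; hence `12 B ≡ 1`.
The Stickelberger ideal contains `pθ = Σ_{a ≤ p-2} a σ_a⁻¹`, whose image `Σ_{a ≤ p-2} a ω(a)` is
`≡ Σ a² - 1 ≡ -1 (mod p)`, a unit; so `ω⁻¹(𝒥_p) = ℤ_p = B ℤ_p`. -/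

open Finset

section

variable {p}

namespace PadicInt

lemma toZMod_eq_zero_iff_dvd (x : ℤ_[p]) : toZMod x = 0 ↔ (p : ℤ_[p]) ∣ x := by
  rw [← RingHom.mem_ker, ker_toZMod, maximalIdeal_eq_span_p, Ideal.mem_span_singleton]

lemma isUnit_of_toZMod_ne_zero {x : ℤ_[p]} (h : toZMod x ≠ 0) : IsUnit x := by
  by_contra hx
  exact h (by rwa [← RingHom.mem_ker, ker_toZMod])

end PadicInt

namespace ZMod

lemma val_two_mul_add {n : ℕ} [NeZero n] (x : ZMod n) :
    (2 * x).val + (if n ≤ 2 * x.val then n else 0) = 2 * x.val := by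
  rw [two_mul, two_mul]
  split_ifs with h
  · exact (val_add_val_of_le h).symm
  · rw [add_zero, val_add_of_lt (by omega)]

lemma val_le_sub_two_iff {n : ℕ} [Fact (1 < n)] (x : ZMod n) : x.val ≤ n - 2 ↔ x ≠ -1 := by
  have hn : 1 < n := Fact.out
  obtain ⟨m, rfl⟩ : ∃ m, n = m + 1 := ⟨n - 1, by omega⟩
  rw [Ne, ← (val_injective _).eq_iff, val_neg_one]
  have := x.val_lt
  omega

lemma eight_mul_sum_Ico_half {n : ℕ} (hn : Odd n) :
    8 * ∑ a ∈ Ico ((n + 1) / 2) n, (a : ZMod n) = 1 := by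
  obtain ⟨m, rfl⟩ := hn
  have hm : (2 * m + 1 + 1) / 2 = m + 1 := by omega
  have gauss (k : ℕ) :
      (∑ a ∈ range (k + 1), (a : ZMod (2 * m + 1))) * 2 = ((k : ZMod (2 * m + 1)) + 1) * k := by
    have h := sum_range_id_mul_two (k + 1)
    rw [Nat.add_sub_cancel] at h
    simpa using congrArg (Nat.cast : ℕ → ZMod (2 * m + 1)) h
  have hn0 : ((2 * m + 1 : ℕ) : ZMod (2 * m + 1)) = 0 := natCast_self _
  rw [hm, sum_Ico_eq_sub _ (by omega)]
  have h1 := gauss (2 * m)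
  have h2 := gauss m
  push_cast at hn0 h1 h2
  linear_combination (4 : ZMod (2 * m + 1)) * h1 - 4 * h2 + (6 * m - 1) * hn0

lemma sum_units_val_eq_sum_Ico {M : Type*} [AddCommMonoid M] (f : ℕ → M) :
    ∑ δ : (ZMod p)ˣ, f (δ : ZMod p).val = ∑ a ∈ Ico 1 p, f a := by
  refine sum_bij (fun δ _ => (δ : ZMod p).val) (fun δ _ => ?_)
    (fun δ _ ε _ h => Units.ext (val_injective p h)) (fun a ha => ?_) (fun _ _ => rfl)
  · simp [Nat.one_le_iff_ne_zero, val_lt]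
  · rw [mem_Ico] at ha
    have ha0 : (a : ZMod p) ≠ 0 := by
      rw [Ne, natCast_eq_zero_iff]
      exact Nat.not_dvd_of_pos_of_lt ha.1 ha.2
    exact ⟨Units.mk0 _ ha0, mem_univ _, val_cast_of_lt ha.2⟩

lemma sum_units_sq (hp : 3 < p) : ∑ δ : (ZMod p)ˣ, (δ : ZMod p) ^ 2 = 0 := by
  classical
  rw [FiniteField.sum_pow_units, ZMod.card, if_neg]
  exact fun h => by have := Nat.le_of_dvd two_pos h; omega

lemma eight_mul_sum_units_upper_half (hp : p ≠ 2) :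
    8 * ∑ δ ∈ univ.filter (fun δ : (ZMod p)ˣ => p ≤ 2 * (δ : ZMod p).val), (δ : ZMod p) = 1 := by
  have hodd : Odd p := (Fact.out : p.Prime).odd_of_ne_two hp
  have hhalf : (Ico 1 p).filter (fun a => p ≤ 2 * a) = Ico ((p + 1) / 2) p := by
    ext a
    simp only [mem_filter, mem_Ico]
    omega
  have hsum := sum_units_val_eq_sum_Ico (p := p) (fun a => if p ≤ 2 * a then (a : ZMod p) else 0)
  simp only [natCast_zmod_val] at hsum
  rw [sum_filter, hsum, ← sum_filter, hhalf, eight_mul_sum_Ico_half hodd]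

end ZMod

section Teichmuller

open PadicInt

variable (ω : (ZMod p)ˣ →* ℤ_[p]ˣ)

noncomputable def pMulBernoulliOne : ℤ_[p] :=
  ∑ δ : (ZMod p)ˣ, ((δ : ZMod p).val : ℤ_[p]) * (ω δ : ℤ_[p])

lemma toZMod_pMulBernoulliOne (hω : ∀ a : (ZMod p)ˣ, toZMod (ω a : ℤ_[p]) = a) :
    toZMod (pMulBernoulliOne ω) = ∑ δ : (ZMod p)ˣ, (δ : ZMod p) ^ 2 := by
  simp only [pMulBernoulliOne, map_sum, map_mul, map_natCast, ZMod.natCast_zmod_val, hω, sq]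

lemma natCast_dvd_pMulBernoulliOne (hω : ∀ a : (ZMod p)ˣ, toZMod (ω a : ℤ_[p]) = a)
    (hp : 3 < p) : (p : ℤ_[p]) ∣ pMulBernoulliOne ω := by
  rw [← toZMod_eq_zero_iff_dvd, toZMod_pMulBernoulliOne ω hω, ZMod.sum_units_sq hp]

lemma pMulBernoulliOne_eq_of_two_ne_zero (h2 : (2 : ZMod p) ≠ 0) :
    pMulBernoulliOne ω =
      (ω (Units.mk0 2 h2) : ℤ_[p]) * (2 * pMulBernoulliOne ω -
        p * ∑ δ ∈ univ.filter (fun δ : (ZMod p)ˣ => p ≤ 2 * (δ : ZMod p).val), (ω δ : ℤ_[p])) := by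
  set u := Units.mk0 (2 : ZMod p) h2
  have hval (δ : (ZMod p)ˣ) : (((u * δ : (ZMod p)ˣ) : ZMod p).val : ℤ_[p]) =
      2 * (δ : ZMod p).val - if p ≤ 2 * (δ : ZMod p).val then (p : ℤ_[p]) else 0 := by
    have h := congrArg (Nat.cast : ℕ → ℤ_[p]) (ZMod.val_two_mul_add (δ : ZMod p))
    simp only [Nat.cast_add, Nat.cast_ite, Nat.cast_mul, Nat.cast_ofNat, Nat.cast_zero] at h
    rw [Units.val_mul, Units.val_mk0]
    linear_combination h
  calc pMulBernoulliOne ω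
        = ∑ δ : (ZMod p)ˣ, (((u * δ : (ZMod p)ˣ) : ZMod p).val : ℤ_[p]) * (ω (u * δ) : ℤ_[p]) :=
        (Equiv.sum_comp (Equiv.mulLeft u)
          fun δ : (ZMod p)ˣ => ((δ : ZMod p).val : ℤ_[p]) * (ω δ : ℤ_[p])).symm
    _ = _ := by
      rw [pMulBernoulliOne, sum_filter, mul_sum, mul_sum, ← sum_sub_distrib, mul_sum]
      refine sum_congr rfl fun δ _ => ?_
      rw [hval, map_mul, Units.val_mul]
      split_ifs <;> ring

lemma twelve_mul_toZMod_eq_one_of_natCast_mul_eq_pMulBernoulliOne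
    (hω : ∀ a : (ZMod p)ˣ, toZMod (ω a : ℤ_[p]) = a) (hp : p ≠ 2) {B : ℤ_[p]}
    (hB : p * B = pMulBernoulliOne ω) :
    12 * toZMod B = 1 := by
  have h2 : (2 : ZMod p) ≠ 0 := Ring.two_ne_zero (by rwa [ZMod.ringChar_zmod_n])
  set E := ∑ δ ∈ univ.filter (fun δ : (ZMod p)ˣ => p ≤ 2 * (δ : ZMod p).val), (ω δ : ℤ_[p])
  have hdouble : B = (ω (Units.mk0 2 h2) : ℤ_[p]) * (2 * B - E) := by
    apply mul_left_cancel₀ (Nat.cast_ne_zero.mpr (Fact.out : p.Prime).ne_zero : (p : ℤ_[p]) ≠ 0)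
    calc p * B = pMulBernoulliOne ω := hB
      _ = (ω (Units.mk0 2 h2) : ℤ_[p]) * (2 * pMulBernoulliOne ω - p * E) :=
        pMulBernoulliOne_eq_of_two_ne_zero ω h2
      _ = p * ((ω (Units.mk0 2 h2) : ℤ_[p]) * (2 * B - E)) := by rw [← hB]; ring
  have hE : 8 * toZMod E = 1 := by
    simp only [E, map_sum, hω]
    exact ZMod.eight_mul_sum_units_upper_half hp
  have h := congrArg toZMod hdouble
  rw [map_mul, hω, Units.val_mk0, map_sub, map_mul, map_ofNat] at h
  linear_combination (-4 : ZMod p) * h + hE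

end Teichmuller

end

section Stickelberger

open PadicInt MonoidAlgebra

noncomputable def pMulStickelbergerElt : MonoidAlgebra ℤ (ZMod p)ˣ :=
  ∑ δ : (ZMod p)ˣ,
    single δ⁻¹ (if (δ : ZMod p).val ≤ p - 2 then ((δ : ZMod p).val : ℤ) else 0)

lemma intToRatGroupRing_eq_mapRingHom :
    intToRatGroupRing p = mapRingHom (ZMod p)ˣ (Int.castRingHom ℚ) :=
  rfl

lemma memStickelbergerIdeal_pMulStickelbergerElt :
    memStickelbergerIdeal p (pMulStickelbergerElt p) := by
  have hp0 : (p : ℚ) ≠ 0 := Nat.cast_ne_zero.mpr (Fact.out : p.Prime).ne_zero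
  refine ⟨single 1 (p : ℤ), ?_⟩
  rw [intToRatGroupRing_eq_mapRingHom, pMulStickelbergerElt, map_sum, mapRingHom_single,
    stickelbergerElt, smul_mul_assoc, sum_mul, smul_sum]
  refine sum_congr rfl fun δ _ => ?_
  rw [mapRingHom_single, smul_mul_assoc, single_mul_single, mul_one, one_mul, smul_single,
    smul_single]
  congr 1
  split_ifs
  · push_cast [smul_eq_mul, eq_intCast]
    field_simp
  · simp

variable {p}

lemma omegaInvEval_pMulStickelbergerElt (ω : (ZMod p)ˣ →* ℤ_[p]ˣ) :
    omegaInvEval p ω (pMulStickelbergerElt p) = ∑ δ : (ZMod p)ˣ,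
      ((if (δ : ZMod p).val ≤ p - 2 then ((δ : ZMod p).val : ℤ) else 0 : ℤ) : ℤ_[p]) *
        (ω δ : ℤ_[p]) := by
  rw [pMulStickelbergerElt, map_sum]
  refine sum_congr rfl fun δ _ => ?_
  simp [omegaInvEval, lift_single, zsmul_eq_mul]

lemma toZMod_omegaInvEval_pMulStickelbergerElt (ω : (ZMod p)ˣ →* ℤ_[p]ˣ)
    (hω : ∀ a : (ZMod p)ˣ, toZMod (ω a : ℤ_[p]) = a) (hp : 3 < p) :
    toZMod (omegaInvEval p ω (pMulStickelbergerElt p)) = -1 := by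
  have hterm (δ : (ZMod p)ˣ) : toZMod
      (((if (δ : ZMod p).val ≤ p - 2 then ((δ : ZMod p).val : ℤ) else 0 : ℤ) : ℤ_[p]) *
        (ω δ : ℤ_[p])) = (δ : ZMod p) ^ 2 - if δ = -1 then (δ : ZMod p) ^ 2 else 0 := by
    have hcond : (δ : ZMod p).val ≤ p - 2 ↔ δ ≠ -1 := by
      rw [ZMod.val_le_sub_two_iff, Ne, Ne, ← Units.val_inj, Units.val_neg, Units.val_one]
    simp only [map_mul, map_intCast, hω, hcond]
    by_cases h : δ = -1 <;> simp [h, sq]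
  rw [omegaInvEval_pMulStickelbergerElt, map_sum, sum_congr rfl fun δ _ => hterm δ,
    sum_sub_distrib, ZMod.sum_units_sq hp, sum_ite_eq' univ (-1)]
  simp

lemma span_omegaInvEval_stickelbergerIdeal_eq_top (ω : (ZMod p)ˣ →* ℤ_[p]ˣ)
    (hω : ∀ a : (ZMod p)ˣ, toZMod (ω a : ℤ_[p]) = a) (hp : 3 < p) :
    Ideal.span {t : ℤ_[p] | ∃ z : MonoidAlgebra ℤ (ZMod p)ˣ,
      memStickelbergerIdeal p z ∧ omegaInvEval p ω z = t} = ⊤ :=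
  Ideal.eq_top_of_isUnit_mem _
    (Ideal.subset_span ⟨_, memStickelbergerIdeal_pMulStickelbergerElt p, rfl⟩)
    (isUnit_of_toZMod_ne_zero (by
      rw [toZMod_omegaInvEval_pMulStickelbergerElt ω hω hp]; exact neg_ne_zero.mpr one_ne_zero))

end Stickelberger

/-- Let `p ≥ 5` be prime, `ω` the Teichmüller character of
`Δ = (ℤ/pℤ)ˣ`, `θ` the Stickelberger element and `𝒥 = ℤΔ ∩ θ·ℤΔ` the Stickelberger
ideal. Then `ω⁻¹(𝒥_p) = B_{1,ω}·ℤ_p` where `𝒥_p` is the `p`-completion of `𝒥`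
(the `ℤ_p`-ideal generated by `ω⁻¹(𝒥)`), and `B_{1,ω} ≡ 1/12 (mod p)`;
in particular `ω⁻¹(𝒥_p) = ℤ_p`. -/
theorem stmt_14 (hp5 : 5 ≤ p)
    (ω : (ZMod p)ˣ →* ℤ_[p]ˣ)
    (hω : ∀ a : (ZMod p)ˣ, PadicInt.toZMod ((ω a : ℤ_[p])) = (a : ZMod p)) :
    ∃ B1ω : ℤ_[p],
      (p : ℤ_[p]) * B1ω
          = ∑ δ : (ZMod p)ˣ, (((δ : ZMod p)).val : ℤ_[p]) * ((ω δ : ℤ_[p])) ∧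
      Ideal.span {t : ℤ_[p] | ∃ z : MonoidAlgebra ℤ (ZMod p)ˣ,
          memStickelbergerIdeal p z ∧ omegaInvEval p ω z = t} = Ideal.span {B1ω} ∧
      (∃ u : ℤ_[p], (12 : ℤ_[p]) * u = 1 ∧ B1ω - u ∈ Ideal.span {(p : ℤ_[p])}) ∧
      Ideal.span {t : ℤ_[p] | ∃ z : MonoidAlgebra ℤ (ZMod p)ˣ,
          memStickelbergerIdeal p z ∧ omegaInvEval p ω z = t} = ⊤ := by
  obtain ⟨B, hB⟩ := natCast_dvd_pMulBernoulliOne ω hω (by omega)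
  have hB12 : 12 * PadicInt.toZMod B = 1 :=
    twelve_mul_toZMod_eq_one_of_natCast_mul_eq_pMulBernoulliOne ω hω (by omega) hB.symm
  have htop := span_omegaInvEval_stickelbergerIdeal_eq_top ω hω (by omega)
  have h12 : PadicInt.toZMod (12 : ℤ_[p]) ≠ 0 := by
    rw [map_ofNat]
    exact left_ne_zero_of_mul_eq_one hB12
  obtain ⟨u, hu⟩ := (PadicInt.isUnit_of_toZMod_ne_zero h12).exists_right_inv
  refine ⟨B, hB.symm, ?_, ⟨u, hu, ?_⟩, htop⟩
  · rw [htop, eq_comm, Ideal.span_singleton_eq_top]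
    exact PadicInt.isUnit_of_toZMod_ne_zero (right_ne_zero_of_mul_eq_one hB12)
  · rw [Ideal.mem_span_singleton, ← PadicInt.toZMod_eq_zero_iff_dvd, map_sub, sub_eq_zero]
    have hu' := congrArg PadicInt.toZMod hu
    rw [map_mul, map_ofNat, map_one] at hu'
    exact mul_left_cancel₀ (left_ne_zero_of_mul_eq_one hB12) (hB12.trans hu'.symm)

end
end

section
/- Let p ≥ 5 be a prime with [K(ζ_p):K] = 2 for a number field K, and let 𝔭 be a prime of K above p with ramification index e over ℚ. Then (p-1)/2 divides e. In particular, if e ∈ {2, 3} then either p = 5 and e = 2, or p = 7 and e = 3; and p ≥ 11 forces e ≥ 5. -/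
/-!
In `L = K(ζ_p)` the rational prime `p` is associated to `(ζ - 1) ^ (p - 1)`, so every prime `𝔓`
of `L` above `p` has ramification index over `ℚ` divisible by `p - 1`. By multiplicativity in the
tower `ℚ ⊆ K ⊆ L` this index is `e * e(𝔓 | 𝔭)`, and `e(𝔓 | 𝔭) ≤ [L : K] = 2`, so `p - 1 ∣ 2 e`.
-/

open NumberField Ideal

theorem Ideal.ramificationIdx_le_finrank_of_flat {R S : Type*} [CommRing R] [IsDomain R]
    [CommRing S] [Algebra R S] [Module.Finite R S] [Module.Flat R S] (q : Ideal S) [q.IsPrime] :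
    q.ramificationIdx R ≤ Module.finrank R S := by
  have : Fintype ((q.under R).primesOver S) := (Algebra.QuasiFinite.finite_primesOver _).fintype
  rw [← sum_ramification_inertia_eq_finrank (q.under R) S]
  calc q.ramificationIdx R ≤ q.ramificationIdx R * q.inertiaDeg R :=
        Nat.le_mul_of_pos_right _ (q.inertiaDeg_pos R)
    _ ≤ _ := Finset.single_le_sum (f := fun P : (q.under R).primesOver S ↦
        P.1.ramificationIdx R * P.1.inertiaDeg R) (fun _ _ ↦ Nat.zero_le _)
        (Finset.mem_univ ⟨q, inferInstance, ⟨rfl⟩⟩)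

theorem sub_one_dvd_ramificationIdx_of_isPrimitiveRoot {p : ℕ} [Fact p.Prime] {L : Type*}
    [Field L] [NumberField L] {ζ : L} (hζ : IsPrimitiveRoot ζ p) (P : Ideal (𝓞 L))
    [P.LiesOver (span {(p : ℤ)})] : p - 1 ∣ P.ramificationIdx ℤ := by
  have hmap : (span {(p : ℤ)}).map (algebraMap ℤ (𝓞 L)) = span {hζ.toInteger - 1} ^ (p - 1) := by
    rw [map_span, Set.image_singleton, map_natCast, span_singleton_pow,
      span_singleton_eq_span_singleton.mpr
        (IsCyclotomicExtension.Rat.associated_zeta_sub_one_pow_prime p hζ)]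
  have hp0 : (span {(p : ℤ)}).map (algebraMap ℤ (𝓞 L)) ≠ ⊥ :=
    map_ne_bot_of_ne_bot (by simpa using (Fact.out : p.Prime).ne_zero)
  rw [IsDedekindDomain.ramificationIdx_eq_normalizedFactors_count _ P hp0, hmap,
    UniqueFactorizationMonoid.normalizedFactors_pow, Multiset.count_nsmul]
  exact dvd_mul_right _ _

theorem liesOver_span_natCast {R : Type*} [CommRing R] {p : ℕ} [Fact p.Prime] (P : Ideal R)
    [P.IsPrime] (h : (p : R) ∈ P) : P.LiesOver (span {(p : ℤ)}) := by
  rw [liesOver_iff]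
  refine (IsMaximal.eq_of_le (Int.ideal_span_isMaximal_of_prime p) IsPrime.ne_top' ?_)
  rw [span_singleton_le_iff_mem, mem_comap, algebraMap_int_eq, map_natCast]
  exact h

theorem Nat.div_two_dvd_of_dvd_mul {m a b : ℕ} (hm : 2 ∣ m) (hb : b ∣ 2) (h : m ∣ a * b) :
    m / 2 ∣ a := by
  obtain ⟨k, rfl⟩ := hm
  rw [Nat.mul_div_cancel_left k two_pos]
  exact Nat.dvd_of_mul_dvd_mul_left two_pos <| h.trans <| by
    simpa [mul_comm] using mul_dvd_mul_left a hb

theorem Nat.Prime.eq_five_or_eq_seven_of_half_pred_dvd {p e : ℕ} (hp : p.Prime) (hp5 : 5 ≤ p)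
    (h : (p - 1) / 2 ∣ e) (he : e = 2 ∨ e = 3) : (p = 5 ∧ e = 2) ∨ (p = 7 ∧ e = 3) := by
  obtain ⟨k, rfl⟩ := hp.odd_of_ne_two (by omega)
  rw [show (2 * k + 1 - 1) / 2 = k by omega] at h
  rcases he with rfl | rfl
  · rcases (Nat.dvd_prime Nat.prime_two).1 h with rfl | rfl <;> omega
  · rcases (Nat.dvd_prime Nat.prime_three).1 h with rfl | rfl <;> omega

theorem stmt_19_general (p : ℕ) [hp : Fact p.Prime] (hp5 : 5 ≤ p)
    (K : Type) [Field K] [NumberField K]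
    (L : Type) [Field L] [Algebra K L]
    [IsCyclotomicExtension {p} K L]
    (hdeg : Module.finrank K L = 2)
    (𝔭 : Ideal (𝓞 K)) (hprime : 𝔭.IsPrime)
    (hover : (p : 𝓞 K) ∈ 𝔭)
    (e : ℕ)
    (he : e = Ideal.ramificationIdx' (Ideal.span {(p : ℤ)}) 𝔭) :
    (p - 1) / 2 ∣ e ∧
    ((e = 2 ∨ e = 3) → ((p = 5 ∧ e = 2) ∨ (p = 7 ∧ e = 3))) ∧
    (11 ≤ p → 5 ≤ e) := by
  have : FiniteDimensional K L := IsCyclotomicExtension.finite {p} K L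
  have : NumberField L := .of_module_finite K L
  have := liesOver_span_natCast 𝔭 hover
  obtain ⟨⟨𝔓, _, _⟩⟩ := nonempty_primesOver (S := 𝓞 L) 𝔭
  have := LiesOver.trans 𝔓 𝔭 (span {(p : ℤ)})
  have heℤ : e = 𝔭.ramificationIdx ℤ := he.trans <|
    ramificationIdx'_eq_ramificationIdx _ _ (by simpa using hp.out.ne_zero)
  have hdvd : p - 1 ∣ e * 𝔓.ramificationIdx (𝓞 K) := by
    rw [heℤ, ← ramificationIdx_tower]
    exact sub_one_dvd_ramificationIdx_of_isPrimitiveRoot (IsCyclotomicExtension.zeta_spec p K L)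
      𝔓
  have hle : 𝔓.ramificationIdx (𝓞 K) ≤ 2 :=
    hdeg ▸ IsFractionRing.finrank_eq (𝓞 K) K (𝓞 L) L ▸ ramificationIdx_le_finrank_of_flat 𝔓
  have hpos : 0 < 𝔓.ramificationIdx (𝓞 K) := ramificationIdx_pos _ _
  have hhalf : (p - 1) / 2 ∣ e := Nat.div_two_dvd_of_dvd_mul
    (hp.out.even_sub_one (by omega)).two_dvd
    ((Nat.dvd_prime Nat.prime_two).2 (by omega)) hdvd
  have hne : e ≠ 0 := heℤ ▸ (ramificationIdx_pos _ _).ne'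
  refine ⟨hhalf, hp.out.eq_five_or_eq_seven_of_half_pred_dvd hp5 hhalf, fun hp11 ↦ ?_⟩
  exact (show 5 ≤ (p - 1) / 2 by omega).trans (Nat.le_of_dvd (Nat.pos_of_ne_zero hne) hhalf)

/-- Let `p ≥ 5` be a prime and `K` a number field with `[K(ζ_p):K] = 2`,
and let `𝔭` be a prime of `K` above `p` with ramification index `e` over `ℚ`.
Then `(p-1)/2` divides `e`. In particular, if `e ∈ {2, 3}` then either `p = 5` and
`e = 2`, or `p = 7` and `e = 3`; and `p ≥ 11` forces `e ≥ 5`. -/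
theorem stmt_19 (p : ℕ) [hp : Fact p.Prime] (hp5 : 5 ≤ p)
    (K : Type) [Field K] [NumberField K]
    (L : Type) [Field L] [Algebra K L]
    [IsCyclotomicExtension {p} K L]
    (hdeg : Module.finrank K L = 2)
    (𝔭 : Ideal (𝓞 K)) (hprime : 𝔭.IsPrime) (hbot : 𝔭 ≠ ⊥)
    (hover : (p : 𝓞 K) ∈ 𝔭)
    (e : ℕ)
    (he : e = Ideal.ramificationIdx' (Ideal.span {(p : ℤ)}) 𝔭) :
    (p - 1) / 2 ∣ e ∧
    ((e = 2 ∨ e = 3) → ((p = 5 ∧ e = 2) ∨ (p = 7 ∧ e = 3))) ∧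
    (11 ≤ p → 5 ≤ e) :=
  stmt_19_general p (hp := hp) hp5 K L hdeg 𝔭 hprime hover e he
end
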